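/- arXiv:2505.24491 — 10 statements merged into one kernel-verified Lean document; each statement's English description precedes it below -/
import Mathlib

section
/- Let m and N be positive integers, let σ ∈ S_m be the standard long cycle, and let α ∈ S_m be any permutation. Then the element w_{gl(N)}(α) = ∑_{i : {1,…,m} → {1,…,N}} ι(E_{i(1), i(α(1))}) · ι(E_{i(2), i(α(2))}) ⋯ ι(E_{i(m), i(α(m))}) of the universal enveloping algebra U(gl(N)) lies in the center of U(gl(N)). -/
open scoped BigOperators

attribute [local instance 100] LieRing.ofAssociativeRing

/-- The matrix unit `E i j` in `gl(N)`, i.e. the `N × N` complex matrix with a `1` in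
position `(i, j)` and `0` elsewhere. -/
noncomputable def glE (N : ℕ) (i j : Fin N) : Matrix (Fin N) (Fin N) ℂ :=
  Matrix.single i j 1

/-- The universal `gl(N)`-weight system on a permutation `α` of `m` elements:
`w_{gl(N)}(α) = ∑_{i : Fin m → Fin N} ι(E_{i 1, i (α 1)}) ⋯ ι(E_{i m, i (α m)})`,
an element of the universal enveloping algebra of `gl(N)`. -/
noncomputable def wgl (m N : ℕ) (α : Equiv.Perm (Fin m)) :
    UniversalEnvelopingAlgebra ℂ (Matrix (Fin N) (Fin N) ℂ) :=
  ∑ i : Fin m → Fin N,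
    ((List.finRange m).map fun k =>
      UniversalEnvelopingAlgebra.ι ℂ (glE N (i k) (i (α k)))).prod

/-!
Since the `E_{ab}` span `gl(N)` and `ι(gl(N))` generates `U(gl(N))`, it suffices that `w(α)`
commutes with every `ι(E_{ab})`. The bracket with `ι(E_{ab})` is a derivation, so on a monomial
it replaces one factor `E_{i k, i (α k)}` by
`⁅E_{ab}, E_{i k, i (α k)}⁆ = δ_{i k, b} E_{a, i (α k)} - δ_{i (α k), a} E_{i k, b}`.
After moving the slot of the second family of terms along `α`, the substitution
`i ↦ update i k a` (inverse `update · k b`) matches it term by term with the first family.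
-/

open Function UniversalEnvelopingAlgebra

section UniversalEnvelopingAlgebra

variable (R : Type*) {L : Type*} [CommRing R] [LieRing L] [LieAlgebra R L]

theorem UniversalEnvelopingAlgebra.adjoin_range_ι :
    Algebra.adjoin R (Set.range (ι R (L := L))) = ⊤ := by
  rw [← (mkAlgHom R L).range_eq_top.mpr (RingCon.mkₐ_surjective _), ← Algebra.map_top,
    ← TensorAlgebra.adjoin_range_ι, AlgHom.map_adjoin, ← Set.range_comp]
  rfl

variable {R}

theorem UniversalEnvelopingAlgebra.mem_center_of_forall_commute_ι
    {w : UniversalEnvelopingAlgebra R L} (h : ∀ x, Commute w (ι R x)) :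
    w ∈ Subalgebra.center R (UniversalEnvelopingAlgebra R L) := by
  have hle : Algebra.adjoin R (Set.range (ι R)) ≤ Subalgebra.centralizer R {w} :=
    Algebra.adjoin_le <| by
      rintro _ ⟨x, rfl⟩
      exact (Subalgebra.mem_centralizer_iff R).mpr fun _ hw => hw ▸ h x
  rw [Subalgebra.mem_center_iff]
  intro y
  have hy : y ∈ Subalgebra.centralizer R {w} := hle (by rw [adjoin_range_ι]; trivial)
  exact ((Subalgebra.mem_centralizer_iff R).mp hy w rfl).symm

end UniversalEnvelopingAlgebra

theorem Ring.lie_mul_right {A : Type*} [Ring A] (x a b : A) :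
    ⁅x, a * b⁆ = ⁅x, a⁆ * b + a * ⁅x, b⁆ := by
  simp only [Ring.lie_def]
  noncomm_ring

theorem Ring.lie_list_ofFn_prod {A : Type*} [Ring A] (x : A) {n : ℕ} (f : Fin n → A) :
    ⁅x, (List.ofFn f).prod⁆ = ∑ l, (List.ofFn (update f l ⁅x, f l⁆)).prod := by
  induction n with
  | zero => simp [Ring.lie_def]
  | succ n ih =>
    rw [← Fin.cons_self_tail f]
    simp only [List.ofFn_succ, Fin.cons_zero, Fin.cons_succ, List.prod_cons, Ring.lie_mul_right,
      ih, Fin.sum_univ_succ, Finset.mul_sum, ← Fin.cons_update, Fin.update_cons_zero]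

theorem Fintype.sum_ite_apply_eq_update_swap {ι κ M : Type*} [Fintype ι] [DecidableEq ι]
    [Fintype κ] [DecidableEq κ] [AddCommMonoid M] (l : ι) (a b : κ)
    (G : (ι → κ) → (ι → κ) → M) :
    ∑ i, (if i l = b then G (update i l a) i else 0) =
      ∑ i, if i l = a then G i (update i l b) else 0 := by
  rw [← Finset.sum_filter, ← Finset.sum_filter]
  refine Finset.sum_nbij' (update · l a) (update · l b) ?_ ?_ ?_ ?_ fun i hi => ?_
  all_goals simp_all
  rw [← hi, update_eq_self]

theorem glE_mul_glE (N : ℕ) (a b c d : Fin N) :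
    glE N a b * glE N c d = if b = c then glE N a d else 0 := by
  split_ifs with h
  · subst h
    simp [glE]
  · simp [glE, h]

theorem glE_lie_glE (N : ℕ) (a b c d : Fin N) :
    ⁅glE N a b, glE N c d⁆ =
      (if c = b then glE N a d else 0) - (if d = a then glE N c b else 0) := by
  simp only [Ring.lie_def, glE_mul_glE, eq_comm (a := b)]

noncomputable def glMonomial {m : ℕ} (N : ℕ) (r c : Fin m → Fin N) :
    UniversalEnvelopingAlgebra ℂ (Matrix (Fin N) (Fin N) ℂ) :=
  MultilinearMap.mkPiAlgebraFin ℂ m _ fun k => ι ℂ (glE N (r k) (c k))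

theorem wgl_eq_sum_glMonomial (m N : ℕ) (α : Equiv.Perm (Fin m)) :
    wgl m N α = ∑ i : Fin m → Fin N, glMonomial N i (i ∘ α) := by
  simp only [wgl, glMonomial, MultilinearMap.mkPiAlgebraFin_apply, List.ofFn_eq_map, comp_apply]

theorem lie_ι_glE_glMonomial {m N : ℕ} (a b : Fin N) (r c : Fin m → Fin N) :
    ⁅ι ℂ (glE N a b), glMonomial N r c⁆ =
      ∑ l, ((if r l = b then glMonomial N (update r l a) c else 0) -
        (if c l = a then glMonomial N r (update c l b) else 0)) := by
  have update_row : ∀ l x, update (fun k => ι ℂ (glE N (r k) (c k))) l (ι ℂ (glE N x (c l))) =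
      fun k => ι ℂ (glE N (update r l x k) (c k)) := by
    intro l x; funext k; rcases eq_or_ne k l with rfl | hk <;> simp [*]
  have update_col : ∀ l y, update (fun k => ι ℂ (glE N (r k) (c k))) l (ι ℂ (glE N (r l) y)) =
      fun k => ι ℂ (glE N (r k) (update c l y k)) := by
    intro l y; funext k; rcases eq_or_ne k l with rfl | hk <;> simp [*]
  rw [glMonomial, MultilinearMap.mkPiAlgebraFin_apply, Ring.lie_list_ofFn_prod]
  refine Finset.sum_congr rfl fun l _ => ?_
  rw [← LieHom.map_lie, glE_lie_glE, map_sub, apply_ite (ι ℂ), apply_ite (ι ℂ), map_zero,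
    ← MultilinearMap.mkPiAlgebraFin_apply (R := ℂ), MultilinearMap.map_update_sub]
  congr 1 <;> split_ifs <;>
    simp only [glMonomial, update_row, update_col, MultilinearMap.map_update_zero]

theorem commute_wgl_ι_glE (m N : ℕ) (α : Equiv.Perm (Fin m)) (a b : Fin N) :
    Commute (wgl m N α) (ι ℂ (glE N a b)) := by
  rw [Commute.symm_iff, commute_iff_lie_eq, wgl_eq_sum_glMonomial, lie_sum]
  simp only [lie_ι_glE_glMonomial, Finset.sum_sub_distrib]
  rw [sub_eq_zero]
  conv_lhs => rw [Finset.sum_comm]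
  conv_rhs => rw [Finset.sum_comm, ← Equiv.sum_comp α.symm]
  refine Finset.sum_congr rfl fun l _ => ?_
  simp only [comp_apply, Equiv.apply_symm_apply, ← update_comp_equiv]
  exact Fintype.sum_ite_apply_eq_update_swap l a b fun r i => glMonomial N r (i ∘ α)

theorem wgl_mem_center_general (m N : ℕ) (α : Equiv.Perm (Fin m)) :
    wgl m N α ∈ Subalgebra.center ℂ
      (UniversalEnvelopingAlgebra ℂ (Matrix (Fin N) (Fin N) ℂ)) := by
  refine mem_center_of_forall_commute_ι fun X => ?_
  induction X using Matrix.induction_on' with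
  | h_zero => simp
  | h_add X Y hX hY => simpa using hX.add_right hY
  | h_std_basis a b x =>
    have hx : Matrix.single a b x = x • glE N a b := by simp [glE]
    rw [hx, map_smul]
    exact (commute_wgl_ι_glE m N α a b).smul_right x

/-- The element `w_{gl(N)}(α)` lies in the center of `U(gl(N))`. -/
theorem wgl_mem_center (m N : ℕ) (hm : 0 < m) (hN : 0 < N) (α : Equiv.Perm (Fin m)) :
    wgl m N α ∈ Subalgebra.center ℂ
      (UniversalEnvelopingAlgebra ℂ (Matrix (Fin N) (Fin N) ℂ)) :=
  wgl_mem_center_general m N α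
end

section
/- Let m and N be positive integers and let σ ∈ S_m be the standard long cycle. For every permutation α ∈ S_m one has w_{gl(N)}(σ⁻¹ · α · σ) = w_{gl(N)}(α), i.e., the element w_{gl(N)}(α) of U(gl(N)) is invariant under conjugation of α by the standard cyclic permutation. -/
open scoped BigOperators

attribute [local instance 100] LieRing.ofAssociativeRing

/-!
Write `f_i(k) = ι(E_{i(k), i(α k)})`. After the substitution `i ↦ i ∘ σ` the conjugated weight
system is `∑_i f_i(1) ⋯ f_i(m-1) f_i(0)`, so it differs from `w(α)` by
`∑_i ⁅f_i(0), f_i(1) ⋯ f_i(m-1)⁆`. Expanding this commutator as a derivation and using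
`⁅E_ab, E_cd⁆ = δ_bc E_ad - δ_da E_cb`, each slot `s` contributes a "left" and a "right" sum over
indices `i` in which two slots are contracted. A relabelling of the summation indices identifies the
left sum at slot `α t` with the right sum at slot `t`, so everything cancels.
-/

open Function

theorem lie_prod_ofFn {A : Type*} [Ring A] {n : ℕ} (a : A) (g : Fin n → A) :
    ⁅a, (List.ofFn g).prod⁆ = ∑ k, (List.ofFn (update g k ⁅a, g k⁆)).prod := by
  induction n with
  | zero => simp [LieRing.of_associative_ring_bracket]
  | succ n ih =>
    have hleibniz : ∀ x y : A, ⁅a, x * y⁆ = ⁅a, x⁆ * y + x * ⁅a, y⁆ := fun x y => by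
      simp only [LieRing.of_associative_ring_bracket]; noncomm_ring
    simp only [List.ofFn_succ, List.prod_cons, Fin.sum_univ_succ, update_self,
      ← Fin.tail_def, Fin.tail_update_zero, Fin.tail_update_succ, hleibniz, ih, Finset.mul_sum]
    simp [Fin.tail_def, eq_comm (a := (0 : Fin (n + 1)))]

section tailProd

variable {A : Type*} [Ring A] {n : ℕ}

def tailProd (g : Fin (n + 1) → A) : A :=
  (List.ofFn (Fin.tail g)).prod

theorem prod_ofFn_eq_mul_tailProd (g : Fin (n + 1) → A) :
    (List.ofFn g).prod = g 0 * tailProd g := by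
  rw [List.ofFn_succ, List.prod_cons, tailProd, Fin.tail_def]

theorem prod_ofFn_comp_finRotate_eq_tailProd_mul (g : Fin (n + 1) → A) :
    (List.ofFn (g ∘ finRotate (n + 1))).prod = tailProd g * g 0 := by
  rw [List.ofFn_succ', List.prod_concat, tailProd, Fin.tail_def]
  simp [Fin.coeSucc_eq_succ]

theorem tailProd_congr {g h : Fin (n + 1) → A} (hgh : ∀ s ≠ 0, g s = h s) :
    tailProd g = tailProd h := by
  simp only [tailProd, Fin.tail_def, hgh _ (Fin.succ_ne_zero _)]

theorem tailProd_update_sub (g : Fin (n + 1) → A) (k : Fin n) (x y : A) :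
    tailProd (update g k.succ (x - y)) =
      tailProd (update g k.succ x) - tailProd (update g k.succ y) := by
  simpa only [tailProd, Fin.tail_update_succ, MultilinearMap.mkPiAlgebraFin_apply] using
    (MultilinearMap.mkPiAlgebraFin ℤ n A).map_update_sub (Fin.tail g) k x y

theorem tailProd_update_zero (g : Fin (n + 1) → A) (k : Fin n) :
    tailProd (update g k.succ 0) = 0 := by
  simpa only [tailProd, Fin.tail_update_succ, MultilinearMap.mkPiAlgebraFin_apply] using
    (MultilinearMap.mkPiAlgebraFin ℤ n A).map_update_zero (Fin.tail g) k

theorem lie_tailProd (a : A) (g : Fin (n + 1) → A) :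
    ⁅a, tailProd g⁆ = ∑ k : Fin n, tailProd (update g k.succ ⁅a, g k.succ⁆) := by
  simp only [tailProd, lie_prod_ofFn, Fin.tail_update_succ]
  rfl

end tailProd

open UniversalEnvelopingAlgebra

theorem lie_glE {N : ℕ} (a b c d : Fin N) :
    ⁅glE N a b, glE N c d⁆ =
      (if b = c then glE N a d else 0) - (if d = a then glE N c b else 0) := by
  rw [LieRing.of_associative_ring_bracket]
  unfold glE
  congr 1 <;> split_ifs with h <;> simp [Matrix.single_mul_single_of_ne, *]

theorem lie_ι_glE {N : ℕ} (a b c d : Fin N) :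
    ⁅ι ℂ (glE N a b), ι ℂ (glE N c d)⁆ =
      (if b = c then ι ℂ (glE N a d) else 0) - (if d = a then ι ℂ (glE N c b) else 0) := by
  rw [← LieHom.map_lie, lie_glE, map_sub, apply_ite (ι ℂ), apply_ite (ι ℂ), map_zero]

noncomputable def wglFactor (N : ℕ) {m : ℕ} (α : Equiv.Perm (Fin m)) (i : Fin m → Fin N)
    (k : Fin m) : UniversalEnvelopingAlgebra ℂ (Matrix (Fin N) (Fin N) ℂ) :=
  ι ℂ (glE N (i k) (i (α k)))

theorem wgl_eq_sum (m N : ℕ) (α : Equiv.Perm (Fin m)) :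
    wgl m N α = ∑ i, (List.ofFn (wglFactor N α i)).prod := by
  simp only [List.ofFn_eq_map]
  rfl

theorem wgl_conj_eq_sum (m N : ℕ) (α σ : Equiv.Perm (Fin m)) :
    wgl m N (σ⁻¹ * α * σ) = ∑ i, (List.ofFn (wglFactor N α i ∘ σ)).prod := by
  rw [wgl_eq_sum, ← Equiv.sum_comp (Equiv.arrowCongr σ.symm (Equiv.refl (Fin N)))]
  refine Finset.sum_congr rfl fun i _ => ?_
  congr 2
  ext k
  simp [wglFactor, Equiv.Perm.mul_apply]

section Contraction

variable {N n : ℕ} (α : Equiv.Perm (Fin (n + 1)))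

noncomputable def wglLeftContraction (s : Fin (n + 1)) :
    UniversalEnvelopingAlgebra ℂ (Matrix (Fin N) (Fin N) ℂ) :=
  ∑ i with i (α 0) = i s, tailProd (update (wglFactor N α i) s (ι ℂ (glE N (i 0) (i (α s)))))

noncomputable def wglRightContraction (s : Fin (n + 1)) :
    UniversalEnvelopingAlgebra ℂ (Matrix (Fin N) (Fin N) ℂ) :=
  ∑ i with i (α s) = i 0, tailProd (update (wglFactor N α i) s (ι ℂ (glE N (i s) (i (α 0)))))

theorem wglLeftContraction_zero :
    wglLeftContraction (N := N) α 0 = wglRightContraction α 0 := by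
  simp only [wglLeftContraction, wglRightContraction, tailProd, Fin.tail_update_zero, eq_comm]

theorem wglLeftContraction_apply_eq {t : Fin (n + 1)} (ht : t ≠ 0) (hαt : α t ≠ 0) :
    wglLeftContraction (N := N) α (α t) = wglRightContraction α t := by
  -- On the left the constraint makes slot `α t` a copy of slot `α 0`; overwriting it by slot `0`
  -- instead produces exactly the right-hand constraint `j (α t) = j 0`.
  have hα0 : α 0 ≠ α t := α.injective.ne ht.symm
  refine Finset.sum_nbij' (fun i => update i (α t) (i 0)) (fun j => update j (α t) (j (α 0)))
    ?_ ?_ ?_ ?_ ?_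
  · intro i hi
    simp_all [update_of_ne hαt.symm]
  · intro j hj
    simp_all
  · intro i hi
    simp_all
  · intro j hj
    replace hj : j (α t) = j 0 := by simpa using hj
    rw [update_idem, update_of_ne hαt.symm, ← hj, update_eq_self]
  · intro i hi
    replace hi : i (α 0) = i (α t) := by simpa using hi
    apply tailProd_congr
    intro l hl
    simp only [update_apply, wglFactor]
    split_ifs <;> grind [Equiv.apply_eq_iff_eq]

theorem wglLeftContraction_apply_zero {t : Fin (n + 1)} (hαt : α t = 0) :
    wglLeftContraction (N := N) α (α 0) = wglRightContraction α t := by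
  refine Finset.sum_nbij' (· ∘ Equiv.swap 0 (α 0)) (· ∘ Equiv.swap 0 (α 0)) ?_ ?_ ?_ ?_ ?_
  · simp [hαt]
  · simp
  · intro i _
    ext; simp
  · intro j _
    ext; simp
  · intro i _
    apply tailProd_congr
    intro l hl
    simp only [update_apply, wglFactor, Function.comp_apply, Equiv.swap_apply_def]
    split_ifs <;> grind [Equiv.apply_eq_iff_eq]

theorem sum_wglLeftContraction :
    ∑ s, wglLeftContraction (N := N) α s = ∑ t, wglRightContraction α t := by
  -- The right sum at `t` matches the left sum at `α t`, except that the one at `α⁻¹ 0` matches the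
  -- left sum at `α 0` and the one at `0` matches the left sum at `0`.
  rw [← Equiv.sum_comp (Equiv.swap (α 0) 0 * α)]
  refine Finset.sum_congr rfl fun t _ => ?_
  rw [Equiv.Perm.mul_apply]
  by_cases hαt : α t = 0
  · rw [hαt, Equiv.swap_apply_right]
    exact wglLeftContraction_apply_zero α hαt
  by_cases ht : t = 0
  · subst ht
    rw [Equiv.swap_apply_left]
    exact wglLeftContraction_zero α
  · rw [Equiv.swap_apply_of_ne_of_ne (α.injective.ne ht) hαt]
    exact wglLeftContraction_apply_eq α ht hαt

theorem lie_wglFactor_zero_tailProd (i : Fin (n + 1) → Fin N) :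
    ⁅wglFactor N α i 0, tailProd (wglFactor N α i)⁆ = ∑ k : Fin n,
      ((if i (α 0) = i k.succ then
          tailProd (update (wglFactor N α i) k.succ (ι ℂ (glE N (i 0) (i (α k.succ))))) else 0) -
        (if i (α k.succ) = i 0 then
          tailProd (update (wglFactor N α i) k.succ (ι ℂ (glE N (i k.succ) (i (α 0))))) else 0)) := by
  refine (lie_tailProd _ _).trans (Finset.sum_congr rfl fun k _ => ?_)
  rw [wglFactor, wglFactor, lie_ι_glE, tailProd_update_sub]
  congr 1 <;> split_ifs <;> simp only [tailProd_update_zero]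

theorem sum_lie_wglFactor_zero_tailProd :
    ∑ i, ⁅wglFactor N α i 0, tailProd (wglFactor N α i)⁆ = 0 := by
  calc ∑ i, ⁅wglFactor N α i 0, tailProd (wglFactor N α i)⁆
      = ∑ k : Fin n, (wglLeftContraction α k.succ - wglRightContraction α k.succ) := by
        simp only [lie_wglFactor_zero_tailProd, wglLeftContraction, wglRightContraction,
          Finset.sum_filter, ← Finset.sum_sub_distrib]
        exact Finset.sum_comm
    _ = ∑ s, (wglLeftContraction α s - wglRightContraction α s) := by
        rw [Fin.sum_univ_succ, wglLeftContraction_zero, sub_self, zero_add]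
    _ = 0 := by
        rw [Finset.sum_sub_distrib, sum_wglLeftContraction, sub_self]

end Contraction

theorem wgl_conj_finRotate_general (m N : ℕ) (hm : 0 < m) (α : Equiv.Perm (Fin m)) :
    wgl m N ((finRotate m)⁻¹ * α * finRotate m) = wgl m N α := by
  obtain ⟨n, rfl⟩ : ∃ n, m = n + 1 := Nat.exists_eq_add_one_of_ne_zero hm.ne'
  rw [wgl_conj_eq_sum, wgl_eq_sum, eq_comm, ← sub_eq_zero, ← Finset.sum_sub_distrib]
  simp only [prod_ofFn_comp_finRotate_eq_tailProd_mul]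
  simp only [prod_ofFn_eq_mul_tailProd, ← LieRing.of_associative_ring_bracket]
  exact sum_lie_wglFactor_zero_tailProd α

/-- `w_{gl(N)}` is invariant under conjugation by the standard long cycle
`σ = finRotate m` (which sends `k` to `k + 1` modulo `m`). -/
theorem wgl_conj_finRotate (m N : ℕ) (hm : 0 < m) (hN : 0 < N) (α : Equiv.Perm (Fin m)) :
    wgl m N ((finRotate m)⁻¹ * α * finRotate m) = wgl m N α :=
  wgl_conj_finRotate_general m N hm α
end

section
/- Let m and N be positive integers, let σ ∈ S_m be the standard long cycle, and let α ∈ S_m be any permutation. Then the trace of the N×N complex matrix ∑_{i : {1,…,m} → {1,…,N}} E_{i(1), i(α(1))} · E_{i(2), i(α(2))} ⋯ E_{i(m), i(α(m))} (the matrix product taken in the order k = 1, …, m) equals N^{c(σ⁻¹α)}, where c(σ⁻¹α) is the number of orbits of the permutation σ⁻¹·α on {1,…,m}. (In the paper's language: the value of the universal gl-weight system on α in the standard representation is N^{f(α)−1}, where f(α) = c(σ⁻¹α) is the number of faces of the hypermap of α.) -/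
open scoped BigOperators

/-- The setoid on `Fin m` whose classes are the orbits of a permutation `β`. -/
def orbitSetoid {m : ℕ} (β : Equiv.Perm (Fin m)) : Setoid (Fin m) :=
  ⟨β.SameCycle,
    ⟨fun x => Equiv.Perm.SameCycle.refl β x, fun h => h.symm, fun h h' => h.trans h'⟩⟩

/-- `c(β)`: the number of orbits of the permutation `β` on `{1, …, m}`
(fixed points counting as orbits of size one). -/
noncomputable def numOrbits {m : ℕ} (β : Equiv.Perm (Fin m)) : ℕ :=
  Nat.card (Quotient (orbitSetoid β))

/-! The trace of a product `E_{a₁ b₁} ⋯ E_{aₘ bₘ}` of matrix units is `1` if `b_k = a_{σ k}` for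
every `k` (the indices close up into a cycle) and `0` otherwise. Hence the trace in question
counts the maps `i` with `i ∘ α = i ∘ σ`. Putting `j = i ∘ σ`, this says that `j` is invariant
under `σ⁻¹ α`, i.e. constant on its orbits, and there are `N ^ c(σ⁻¹ α)` such `j`. -/

namespace Matrix

variable {ι R : Type*} [DecidableEq ι] [Fintype ι] [Semiring R]

theorem prod_ofFn_single_one (n : ℕ) (a b : Fin (n + 1) → ι) :
    (List.ofFn fun k => single (a k) (b k) (1 : R)).prod =
      if ∀ k : Fin n, b k.castSucc = a k.succ then single (a 0) (b (Fin.last n)) 1 else 0 := by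
  induction n with
  | zero => simp
  | succ n ih =>
    rw [List.ofFn_succ, List.prod_cons, ih (fun k => a k.succ) (fun k => b k.succ)]
    simp only [Fin.forall_fin_succ, Fin.castSucc_zero, Fin.castSucc_succ, Fin.succ_last,
      Fin.succ_zero_eq_one]
    by_cases h0 : b 0 = a 1 <;> simp [h0]

theorem trace_prod_ofFn_single_one (n : ℕ) (a b : Fin (n + 1) → ι) :
    (List.ofFn fun k => single (a k) (b k) (1 : R)).prod.trace =
      if ∀ k, b k = a (finRotate (n + 1) k) then 1 else 0 := by
  simp only [prod_ofFn_single_one, Fin.forall_fin_succ', finRotate_apply, Fin.coeSucc_eq_succ]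
  split_ifs <;> simp_all [trace_single_eq_of_ne, eq_comm]

end Matrix

theorem Equiv.Perm.SameCycle.apply_eq_of_forall_apply_eq {α X : Type*} [Finite α]
    {β : Equiv.Perm α} {j : α → X} (hj : ∀ x, j (β x) = j x) {x y : α}
    (h : β.SameCycle x y) : j x = j y := by
  obtain ⟨n, -, rfl⟩ := h.exists_pow_eq'
  clear h
  induction n with
  | zero => rfl
  | succ n ih => rw [pow_succ', Equiv.Perm.mul_apply, hj, ih]

def invariantFunEquiv {m : ℕ} (β : Equiv.Perm (Fin m)) (X : Type*) :
    {j : Fin m → X // ∀ x, j (β x) = j x} ≃ (Quotient (orbitSetoid β) → X) where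
  toFun j := Quotient.lift j.1 fun _ _ => Equiv.Perm.SameCycle.apply_eq_of_forall_apply_eq j.2
  invFun g := ⟨g ∘ Quotient.mk _,
    fun _ => congrArg g (Quotient.sound (Equiv.Perm.sameCycle_apply_left.2 (.refl _ _)))⟩
  left_inv _ := rfl
  right_inv _ := funext fun q => Quotient.inductionOn q fun _ => rfl

theorem card_invariantFun_eq_pow_numOrbits {m : ℕ} (β : Equiv.Perm (Fin m)) (X : Type*) :
    Nat.card {j : Fin m → X // ∀ x, j (β x) = j x} = Nat.card X ^ numOrbits β := by
  rw [Nat.card_congr (invariantFunEquiv β X), Nat.card_fun, numOrbits]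

open Finset in
theorem card_filter_forall_apply_eq_apply {m : ℕ} (σ α : Equiv.Perm (Fin m)) (X : Type*)
    [Fintype X] [DecidableEq X] :
    #{i : Fin m → X | ∀ k, i (α k) = i (σ k)} = Fintype.card X ^ numOrbits (σ⁻¹ * α) := by
  rw [← Fintype.card_subtype, ← Nat.card_eq_fintype_card, ← Nat.card_eq_fintype_card,
    ← card_invariantFun_eq_pow_numOrbits]
  refine Nat.card_congr (.subtypeEquiv (σ.symm.arrowCongr (.refl X)) fun i => ?_)
  simp [Equiv.arrowCongr_apply]

theorem trace_wgl_standard_general (m N : ℕ) (hm : 0 < m) (α : Equiv.Perm (Fin m)) :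
    Matrix.trace
        (∑ i : Fin m → Fin N,
          ((List.finRange m).map fun k => glE N (i k) (i (α k))).prod)
      = (N : ℂ) ^ numOrbits ((finRotate m)⁻¹ * α) := by
  obtain ⟨n, rfl⟩ := Nat.exists_eq_add_one_of_ne_zero hm.ne'
  simp only [Matrix.trace_sum, ← List.ofFn_eq_map, glE, Matrix.trace_prod_ofFn_single_one,
    Finset.sum_boole]
  rw [card_filter_forall_apply_eq_apply, Fintype.card_fin, Nat.cast_pow]

/-- The value of the universal `gl`-weight system on `α` in the standard representation:
the trace of `∑_i E_{i 1, i (α 1)} ⋯ E_{i m, i (α m)}` equals `N ^ c(σ⁻¹ α)`, where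
`σ = finRotate m` is the standard long cycle and `c(σ⁻¹ α) = f(α)` is the number of faces
of the hypermap of `α`. -/
theorem trace_wgl_standard (m N : ℕ) (hm : 0 < m) (hN : 0 < N) (α : Equiv.Perm (Fin m)) :
    Matrix.trace
        (∑ i : Fin m → Fin N,
          ((List.finRange m).map fun k => glE N (i k) (i (α k))).prod)
      = (N : ℂ) ^ numOrbits ((finRotate m)⁻¹ * α) :=
  trace_wgl_standard_general m N hm α
end

section
/- Let m and N be positive integers and let α ∈ S_m. Suppose α = c · r where c is a cycle, r is a permutation disjoint from c, and the support of c has ℓ elements. Then inverting the cycle c multiplies the value of the so(N)-weight system by (−1)^ℓ: w_{so(N)}(c⁻¹ · r) = (−1)^ℓ · w_{so(N)}(c · r). -/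
/-!
Reindex the sum defining `w_{so(N)}(c⁻¹ r)` by `i ↦ i'`, where `i' k = (i (c k)).rev` on the
support of `c` and `i' k = i k` off it. Since `F_{j.rev, i.rev} = -F_{i j}`, each factor of the
summand for `i'` is the corresponding factor of the summand for `i` in `w_{so(N)}(c r)`, up to a
sign `-1` exactly at the points of the support of `c`.
-/

open scoped BigOperators

attribute [local instance 100] LieRing.ofAssociativeRing

/-- The standard generator `F i j = E_{i j} − E_{N+1−j, N+1−i}` of `so(N)`, viewed as an
`N × N` complex matrix (an element of `gl(N)`). -/
noncomputable def soF (N : ℕ) (i j : Fin N) : Matrix (Fin N) (Fin N) ℂ :=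
  Matrix.single i j 1 - Matrix.single j.rev i.rev 1

/-- The `so(N)`-weight system on a permutation `α` of `m` elements:
`w_{so(N)}(α) = ∑_{i : Fin m → Fin N} ι(F_{i 1, i (α 1)}) ⋯ ι(F_{i m, i (α m)})`,
an element of the universal enveloping algebra of `gl(N)`. -/
noncomputable def wso (m N : ℕ) (α : Equiv.Perm (Fin m)) :
    UniversalEnvelopingAlgebra ℂ (Matrix (Fin N) (Fin N) ℂ) :=
  ∑ i : Fin m → Fin N,
    ((List.finRange m).map fun k =>
      UniversalEnvelopingAlgebra.ι ℂ (soF N (i k) (i (α k)))).prod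

open Equiv

lemma soF_rev_rev (N : ℕ) (i j : Fin N) : soF N j.rev i.rev = -soF N i j := by
  simp only [soF, Fin.rev_rev]
  abel

lemma List.prod_map_smul {ι R A : Type*} [CommMonoid R] [Monoid A] [MulAction R A]
    [IsScalarTower R A A] [SMulCommClass R A A] (l : List ι) (s : ι → R) (f : ι → A) :
    (l.map fun k => s k • f k).prod = (l.map s).prod • (l.map f).prod := by
  induction l with
  | nil => simp
  | cons a l ih =>
    simp only [List.map_cons, List.prod_cons, ih, smul_mul_assoc, mul_smul_comm, smul_smul,
      mul_comm (s a)]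

lemma prod_finRange_map_sign {m : ℕ} {R : Type*} [CommMonoid R] [HasDistribNeg R]
    (S : Finset (Fin m)) :
    ((List.finRange m).map fun k => if k ∈ S then (-1 : R) else 1).prod = (-1) ^ S.card := by
  rw [← Fin.prod_univ_def, Finset.prod_ite_mem, Finset.univ_inter, Finset.prod_const]

namespace Equiv.Perm

variable {α : Type*} [DecidableEq α] [Fintype α]

/-- `i ↦ i ∘ c`, followed by `Fin.rev` on the values at the support of `c`. -/
def revOnSupport {N : ℕ} (c : Perm α) : Perm (α → Fin N) :=
  (arrowCongr c.symm (Equiv.refl _)).trans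
    (piCongrRight fun k => if k ∈ c.support then Fin.revPerm else Equiv.refl _)

lemma revOnSupport_apply_of_mem {N : ℕ} {c : Perm α} (i : α → Fin N) {k : α}
    (hk : k ∈ c.support) : revOnSupport c i k = (i (c k)).rev := by
  simp [revOnSupport, mem_support.mp hk]

lemma revOnSupport_apply_of_notMem {N : ℕ} {c : Perm α} (i : α → Fin N) {k : α}
    (hk : k ∉ c.support) : revOnSupport c i k = i k := by
  simp [revOnSupport, notMem_support.mp hk]

lemma soF_revOnSupport {N : ℕ} {c r : Perm α} (hcr : c.Disjoint r) (i : α → Fin N) (k : α) :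
    soF N (revOnSupport c i k) (revOnSupport c i ((c⁻¹ * r) k)) =
      if k ∈ c.support then -soF N (i k) (i ((c * r) k)) else soF N (i k) (i ((c * r) k)) := by
  by_cases hk : k ∈ c.support
  · have hrk : r k = k := (hcr k).resolve_left (mem_support.mp hk)
    have hck : c⁻¹ k ∈ c.support := by
      rw [← support_inv] at hk ⊢
      exact apply_mem_support.mpr hk
    rw [mul_apply, mul_apply, hrk, if_pos hk, revOnSupport_apply_of_mem i hk,
      revOnSupport_apply_of_mem i hck, eq_inv_iff_eq.mp rfl, soF_rev_rev]
  · have hrk : r k ∉ c.support := by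
      by_cases hkr : k ∈ r.support
      · exact hcr.symm.mem_imp (apply_mem_support.mpr hkr)
      · rwa [notMem_support.mp hkr]
    have hcrk : c (r k) = r k := notMem_support.mp hrk
    have hcrk' : c⁻¹ (r k) = r k := by rw [inv_eq_iff_eq, hcrk]
    simp only [mul_apply, hcrk, hcrk', if_neg hk, revOnSupport_apply_of_notMem i hk,
      revOnSupport_apply_of_notMem i hrk]

end Equiv.Perm

theorem wso_inv_cycle_general (m N : ℕ)
    (α c r : Equiv.Perm (Fin m)) (hdisj : c.Disjoint r)
    (hα : α = c * r) :
    wso m N (c⁻¹ * r) = ((-1 : ℂ) ^ c.support.card) • wso m N α := by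
  subst hα
  rw [wso, wso, Finset.smul_sum]
  refine (Fintype.sum_equiv (Perm.revOnSupport c) _ _ fun i => ?_).symm
  have hsign : ∀ k, UniversalEnvelopingAlgebra.ι ℂ (soF N (Perm.revOnSupport c i k)
      (Perm.revOnSupport c i ((c⁻¹ * r) k))) = (if k ∈ c.support then (-1 : ℂ) else 1) •
        UniversalEnvelopingAlgebra.ι ℂ (soF N (i k) (i ((c * r) k))) := fun k => by
    rw [Perm.soF_revOnSupport hdisj]
    split_ifs <;> simp
  simp only [hsign, List.prod_map_smul, prod_finRange_map_sign]

/-- Inverting a disjoint cycle `c` with `ℓ` legs multiplies the value of the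
`so(N)`-weight system by `(−1)^ℓ`. -/
theorem wso_inv_cycle (m N : ℕ) (hm : 0 < m) (hN : 0 < N)
    (α c r : Equiv.Perm (Fin m)) (hc : c.IsCycle) (hdisj : c.Disjoint r)
    (hα : α = c * r) :
    wso m N (c⁻¹ * r) = ((-1 : ℂ) ^ c.support.card) • wso m N α :=
  wso_inv_cycle_general m N α c r hdisj hα
end

section
/- Let m and N be positive integers and let σ ∈ S_m be the standard long cycle. For every permutation α ∈ S_m one has w_{so(N)}(σ⁻¹ · α · σ) = w_{so(N)}(α), i.e., the so(N)-weight system is unchanged under the cyclic shift of a permutation. -/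
open scoped BigOperators

attribute [local instance 100] LieRing.ofAssociativeRing

/-!
Substituting `i ↦ i ∘ σ` turns each word `X₀ X₁ ⋯ Xₘ₋₁` of `w(σ⁻¹ α σ)`, where
`Xₖ = ι F_{i k, i (α k)}`, into `X₁ ⋯ Xₘ₋₁ X₀`, so it suffices that `∑ᵢ [X₀, X₁ ⋯ Xₘ₋₁] = 0`.
As `2 F_{pq} = ∑_{ab} (F_{pq})_{ab} F_{ab}`, this sum is half of `∑_{ab} [ι F_{ab}, W_{ab}]`, where
`W_{ab}` (`wsoOpen`) sums the words with their first letter replaced by its `(a, b)` entry.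
The matrix `W` is `so(N)`-equivariant, `[ι x, W] = W x - x W`, by the Leibniz rule and a summation
by parts over the labellings `i`: every index `s` occurs once as a row (at position `s`) and once
as a column (at position `α⁻¹ s`). So the sum is `∑_{ab} (W F_{ab} - F_{ab} W)_{ab}`,
and both contractions equal `(N - 1) tr W`.
-/

open Function UniversalEnvelopingAlgebra

lemma update_succ_comp_succ {β : Type*} {n : ℕ} (f : Fin (n + 1) → β) (k : Fin n) (y : β) :
    (fun i : Fin n => update f k.succ y i.succ) = update (fun i => f i.succ) k y :=
  Fin.tail_update_succ f k y

lemma update_succ_apply_zero {β : Type*} {n : ℕ} (f : Fin (n + 1) → β) (k : Fin n) (y : β) :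
    update f k.succ y 0 = f 0 :=
  update_of_ne (Fin.succ_ne_zero k).symm y f

lemma commutator_ofFn_prod {A : Type*} [Ring A] (a : A) {n : ℕ} (f : Fin n → A) :
    a * (List.ofFn f).prod - (List.ofFn f).prod * a =
      ∑ k, (List.ofFn (update f k (a * f k - f k * a))).prod := by
  induction n with
  | zero => simp
  | succ n ih =>
    simp only [List.ofFn_succ, List.prod_cons, Fin.sum_univ_succ, update_self,
      update_succ_apply_zero, update_of_ne (Fin.succ_ne_zero _), update_succ_comp_succ,
      ← Finset.mul_sum]
    rw [← ih]
    noncomm_ring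

/-- Summation by parts: substitute `(j, e) ↦ (update j s e, j s)`. -/
lemma sum_update_row_eq_sum_update_col {ι κ R V : Type*} [Fintype ι] [DecidableEq ι]
    [Fintype κ] [DecidableEq κ] [AddCommMonoid V] [SMul R V]
    (α : Equiv.Perm ι) (x : κ → κ → R) (G : (ι → κ) → (ι → κ) → V) :
    ∑ j : ι → κ, ∑ s, ∑ e, x e (j s) • G (update j s e) (j ∘ α)
      = ∑ j : ι → κ, ∑ s, ∑ e, x ((j ∘ α) s) e • G j (update (j ∘ α) s e) := by
  rw [Finset.sum_comm, ← Equiv.sum_comp α, Finset.sum_comm (s := Finset.univ (α := ι → κ))]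
  refine Finset.sum_congr rfl fun s _ => ?_
  have hinv : Involutive fun p : (ι → κ) × κ => (update p.1 (α s) p.2, p.1 (α s)) := by
    rintro ⟨j, e⟩
    simp
  simp only [← Fintype.sum_prod_type']
  refine Fintype.sum_bijective _ hinv.bijective _ _ fun p => ?_
  simp only [update_comp_equiv, update_self, Equiv.symm_apply_apply, update_idem]
  exact congrArg _ (congrArg _ (update_eq_self s _).symm)

section Matrix

variable {N : ℕ}

lemma soF_apply (p q a b : Fin N) :
    soF N p q a b =
      (if p = a ∧ q = b then 1 else 0) - (if q.rev = a ∧ p.rev = b then 1 else 0) := by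
  simp [soF, Matrix.single_apply]

lemma soF_apply_rev (p q a b : Fin N) : soF N p q b.rev a.rev = -soF N p q a b := by
  simp only [soF_apply]
  split_ifs <;> grind [Fin.rev_rev]

lemma soF_rev (p q : Fin N) : soF N q.rev p.rev = -soF N p q := by
  simp [soF]

lemma soF_apply_comm (x a e : Fin N) : soF N x e x a = soF N a x e x := by
  simp only [soF_apply]
  split_ifs <;> grind [Fin.rev_rev]

lemma two_smul_soF (p q : Fin N) :
    (2 : ℂ) • soF N p q = ∑ a, ∑ b, soF N p q a b • soF N a b := by
  simp [soF_apply, sub_smul, ite_and, Finset.sum_sub_distrib, soF_rev, two_smul]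

lemma commutator_soF (x : Matrix (Fin N) (Fin N) ℂ) (hx : ∀ a b, x b.rev a.rev = -x a b)
    (p q : Fin N) :
    x * soF N p q - soF N p q * x = ∑ e, x e p • soF N e q - ∑ e, x q e • soF N p e := by
  have hrev : ∀ i j : Fin N, i = j.rev ↔ j = i.rev := fun i j => eq_comm.trans Fin.rev_eq_iff
  ext a b
  have h₁ : x q a.rev = -x a q.rev := by simpa using hx a q.rev
  have h₂ : x b.rev p = -x p.rev b := by simpa using hx p.rev b
  simp only [Matrix.sub_apply, Matrix.mul_apply, Matrix.sum_apply, Matrix.smul_apply, smul_eq_mul,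
    soF_apply, ite_and, Fin.rev_eq_iff, hrev q, hrev p, mul_sub, sub_mul, mul_ite, ite_mul, mul_one,
    one_mul, mul_zero, zero_mul, Finset.sum_sub_distrib, Finset.sum_ite_eq, Finset.sum_ite_eq',
    Finset.mem_univ, if_true, Finset.sum_ite_irrel, Finset.sum_const_zero, h₁, h₂]
  split_ifs <;> ring

lemma commutator_soF_apply (x : Matrix (Fin N) (Fin N) ℂ) (hx : ∀ a b, x b.rev a.rev = -x a b)
    (p q a b : Fin N) :
    ∑ e, x e p * soF N e q a b - ∑ e, x q e * soF N p e a b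
      = ∑ e, x a e * soF N p q e b - ∑ e, x e b * soF N p q a e := by
  simpa [Matrix.mul_apply, Matrix.sum_apply, mul_comm] using
    (congrArg (· a b) (commutator_soF x hx p q)).symm

lemma sum_soF_contract_eq_zero {V : Type*} [AddCommGroup V] [Module ℂ V]
    (W : Fin N → Fin N → V) :
    ∑ a, ∑ b, (∑ e, soF N a b e b • W a e - ∑ e, soF N a b a e • W e b) = 0 := by
  simp only [Finset.sum_sub_distrib, sub_eq_zero]
  conv_rhs => enter [2, a, 2, b, 2, e]; rw [soF_apply_comm]
  rw [Finset.sum_comm]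
  exact Finset.sum_congr rfl fun b _ => Finset.sum_comm

end Matrix

section Enveloping

variable {N : ℕ}

lemma ι_mul_sub_mul_ι (x y : Matrix (Fin N) (Fin N) ℂ) :
    ι ℂ x * ι ℂ y - ι ℂ y * ι ℂ x = ι ℂ (x * y - y * x) := by
  simpa only [Ring.lie_def] using ((ι ℂ).map_lie x y).symm

noncomputable def soProd (N : ℕ) {n : ℕ} (r c : Fin n → Fin N) :
    UniversalEnvelopingAlgebra ℂ (Matrix (Fin N) (Fin N) ℂ) :=
  (List.ofFn fun k => ι ℂ (soF N (r k) (c k))).prod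

lemma commutator_soProd (x : Matrix (Fin N) (Fin N) ℂ) (hx : ∀ a b, x b.rev a.rev = -x a b)
    {n : ℕ} (r c : Fin n → Fin N) :
    ι ℂ x * soProd N r c - soProd N r c * ι ℂ x
      = ∑ k, (∑ e, x e (r k) • soProd N (update r k e) c
          - ∑ e, x (c k) e • soProd N r (update c k e)) := by
  set f := fun k => ι ℂ (soF N (r k) (c k))
  have hlin : ∀ k y, (List.ofFn (update f k y)).prod
      = (MultilinearMap.mkPiAlgebraFin ℂ n _).toLinearMap f k y := fun _ _ => rfl
  have hrow : ∀ k e, update f k (ι ℂ (soF N e (c k)))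
      = fun i => ι ℂ (soF N (update r k e i) (c i)) := by
    intro k e; funext i; rcases eq_or_ne i k with rfl | h <;> simp [f, *]
  have hcol : ∀ k e, update f k (ι ℂ (soF N (r k) e))
      = fun i => ι ℂ (soF N (r i) (update c k e i)) := by
    intro k e; funext i; rcases eq_or_ne i k with rfl | h <;> simp [f, *]
  rw [soProd, commutator_ofFn_prod]
  refine Finset.sum_congr rfl fun k _ => ?_
  rw [ι_mul_sub_mul_ι, commutator_soF x hx, hlin]
  simp only [map_sub, map_sum, map_smul]
  simp only [← hlin, hrow, hcol, soProd]

noncomputable def openWord (N : ℕ) {n : ℕ} (a b : Fin N) (r c : Fin (n + 1) → Fin N) :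
    UniversalEnvelopingAlgebra ℂ (Matrix (Fin N) (Fin N) ℂ) :=
  soF N (r 0) (c 0) a b • soProd N (fun k => r k.succ) (fun k => c k.succ)

noncomputable def wsoOpen (N : ℕ) {n : ℕ} (α : Equiv.Perm (Fin (n + 1))) (a b : Fin N) :
    UniversalEnvelopingAlgebra ℂ (Matrix (Fin N) (Fin N) ℂ) :=
  ∑ j : Fin (n + 1) → Fin N, openWord N a b j (j ∘ α)

lemma sum_update_openWord_sub (x : Matrix (Fin N) (Fin N) ℂ)
    (hx : ∀ a b, x b.rev a.rev = -x a b) {n : ℕ} (a b : Fin N) (r c : Fin (n + 1) → Fin N) :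
    ∑ s, ∑ e, x e (r s) • openWord N a b (update r s e) c
        - ∑ s, ∑ e, x (c s) e • openWord N a b r (update c s e)
      = (∑ e, x e (r 0) * soF N e (c 0) a b - ∑ e, x (c 0) e * soF N (r 0) e a b)
          • soProd N (fun k => r k.succ) (fun k => c k.succ)
        + soF N (r 0) (c 0) a b • (ι ℂ x * soProd N (fun k => r k.succ) (fun k => c k.succ)
          - soProd N (fun k => r k.succ) (fun k => c k.succ) * ι ℂ x) := by
  rw [Fin.sum_univ_succ, Fin.sum_univ_succ, commutator_soProd x hx]
  simp only [openWord, update_self, update_of_ne (Fin.succ_ne_zero _), update_succ_apply_zero,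
    update_succ_comp_succ, smul_smul, sub_smul, smul_sub, Finset.sum_smul, Finset.smul_sum,
    Finset.sum_sub_distrib, mul_comm (soF N (r 0) (c 0) a b)]
  abel

lemma commutator_wsoOpen (x : Matrix (Fin N) (Fin N) ℂ) (hx : ∀ a b, x b.rev a.rev = -x a b)
    {n : ℕ} (α : Equiv.Perm (Fin (n + 1))) (a b : Fin N) :
    ι ℂ x * wsoOpen N α a b - wsoOpen N α a b * ι ℂ x
      = ∑ e, x e b • wsoOpen N α a e - ∑ e, x a e • wsoOpen N α e b := by
  set P := fun j : Fin (n + 1) → Fin N => soProd N (fun k => j k.succ) (fun k => j (α k.succ))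
  have hparts : ∑ j, (∑ e, x e (j 0) * soF N e (j (α 0)) a b
      - ∑ e, x (j (α 0)) e * soF N (j 0) e a b) • P j
      + ∑ j, soF N (j 0) (j (α 0)) a b • (ι ℂ x * P j - P j * ι ℂ x) = 0 := by
    have h := sum_update_row_eq_sum_update_col α x (openWord N a b)
    rw [← sub_eq_zero, ← Finset.sum_sub_distrib] at h
    rw [← Finset.sum_add_distrib]
    exact (Finset.sum_congr rfl fun j _ =>
      (sum_update_openWord_sub x hx a b j (j ∘ α)).symm).trans h
  have hhead : ∑ j, (∑ e, x e (j 0) * soF N e (j (α 0)) a b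
      - ∑ e, x (j (α 0)) e * soF N (j 0) e a b) • P j
      = ∑ e, x a e • wsoOpen N α e b - ∑ e, x e b • wsoOpen N α a e := by
    simp only [commutator_soF_apply x hx, wsoOpen, openWord, sub_smul, Finset.sum_smul,
      Finset.smul_sum, smul_smul, Finset.sum_sub_distrib]
    congr 1 <;> exact Finset.sum_comm
  have hcomm : ι ℂ x * wsoOpen N α a b - wsoOpen N α a b * ι ℂ x
      = ∑ j, soF N (j 0) (j (α 0)) a b • (ι ℂ x * P j - P j * ι ℂ x) := by
    simp only [wsoOpen, openWord, Finset.mul_sum, Finset.sum_mul, ← Finset.sum_sub_distrib,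
      mul_smul_comm, smul_mul_assoc, smul_sub, comp_apply, P]
  rw [hhead] at hparts
  rw [hcomm, eq_neg_of_add_eq_zero_right hparts, neg_sub]

lemma sum_commutator_head_eq_zero {n : ℕ} (α : Equiv.Perm (Fin (n + 1))) :
    ∑ j : Fin (n + 1) → Fin N,
      (ι ℂ (soF N (j 0) (j (α 0))) * soProd N (fun k => j k.succ) (fun k => j (α k.succ))
        - soProd N (fun k => j k.succ) (fun k => j (α k.succ)) * ι ℂ (soF N (j 0) (j (α 0))))
      = 0 := by
  set P := fun j : Fin (n + 1) → Fin N => soProd N (fun k => j k.succ) (fun k => j (α k.succ))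
  have hι : ∀ p q, (2 : ℂ) • ι ℂ (soF N p q) = ∑ a, ∑ b, soF N p q a b • ι ℂ (soF N a b) := by
    intro p q
    simp only [← map_smul, two_smul_soF, map_sum]
  have htwo : (2 : ℂ) • ∑ j, (ι ℂ (soF N (j 0) (j (α 0))) * P j
        - P j * ι ℂ (soF N (j 0) (j (α 0))))
      = ∑ a, ∑ b, (ι ℂ (soF N a b) * wsoOpen N α a b - wsoOpen N α a b * ι ℂ (soF N a b)) := by
    calc _ = ∑ j, ((2 : ℂ) • ι ℂ (soF N (j 0) (j (α 0))) * P j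
            - P j * (2 : ℂ) • ι ℂ (soF N (j 0) (j (α 0)))) := by
          simp only [Finset.smul_sum, smul_sub, smul_mul_assoc, mul_smul_comm]
      _ = ∑ j, ∑ a, ∑ b,
            soF N (j 0) (j (α 0)) a b • (ι ℂ (soF N a b) * P j - P j * ι ℂ (soF N a b)) := by
          simp only [hι, Finset.sum_mul, Finset.mul_sum, smul_mul_assoc, mul_smul_comm,
            ← Finset.sum_sub_distrib, smul_sub]
      _ = _ := by
          simp only [wsoOpen, openWord, Finset.mul_sum, Finset.sum_mul, ← Finset.sum_sub_distrib,
            smul_mul_assoc, mul_smul_comm, smul_sub]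
          rw [Finset.sum_comm]
          exact Finset.sum_congr rfl fun a _ => Finset.sum_comm
  have hcontract : ∑ a, ∑ b,
      (ι ℂ (soF N a b) * wsoOpen N α a b - wsoOpen N α a b * ι ℂ (soF N a b)) = 0 := by
    simp only [commutator_wsoOpen _ (soF_apply_rev _ _)]
    exact sum_soF_contract_eq_zero _
  exact (smul_eq_zero.mp (htwo.trans hcontract)).resolve_left two_ne_zero

end Enveloping

lemma wso_succ (n N : ℕ) (α : Equiv.Perm (Fin (n + 1))) :
    wso (n + 1) N α = ∑ j : Fin (n + 1) → Fin N,
      ι ℂ (soF N (j 0) (j (α 0))) * soProd N (fun k => j k.succ) (fun k => j (α k.succ)) := by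
  simp only [wso, ← List.ofFn_eq_map, List.ofFn_succ, List.prod_cons, soProd]

lemma wso_conj_finRotate_succ (n N : ℕ) (α : Equiv.Perm (Fin (n + 1))) :
    wso (n + 1) N ((finRotate (n + 1))⁻¹ * α * finRotate (n + 1)) = ∑ j : Fin (n + 1) → Fin N,
      soProd N (fun k => j k.succ) (fun k => j (α k.succ)) * ι ℂ (soF N (j 0) (j (α 0))) := by
  rw [wso, ← Equiv.sum_comp ((finRotate (n + 1)).symm.arrowCongr (Equiv.refl _))]
  refine Finset.sum_congr rfl fun j _ => ?_
  simp only [Equiv.arrowCongr_apply, Equiv.symm_symm, Equiv.coe_refl, comp_apply, id,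
    Equiv.Perm.mul_apply, Equiv.Perm.coe_inv, Equiv.apply_symm_apply]
  rw [← List.ofFn_eq_map, List.ofFn_succ', List.prod_concat]
  simp only [finRotate_apply, Fin.coeSucc_eq_succ, Fin.last_add_one, soProd]

theorem wso_conj_finRotate_general (m N : ℕ) (α : Equiv.Perm (Fin m)) :
    wso m N ((finRotate m)⁻¹ * α * finRotate m) = wso m N α := by
  cases m with
  | zero => exact congrArg _ (Subsingleton.elim _ _)
  | succ n =>
    rw [wso_conj_finRotate_succ, wso_succ, eq_comm, ← sub_eq_zero, ← Finset.sum_sub_distrib]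
    exact sum_commutator_head_eq_zero α

/-- The `so(N)`-weight system is unchanged under the cyclic shift of a permutation:
`w_{so(N)}(σ⁻¹ α σ) = w_{so(N)}(α)`, where `σ = finRotate m` is the standard long cycle. -/
theorem wso_conj_finRotate (m N : ℕ) (hm : 0 < m) (hN : 0 < N) (α : Equiv.Perm (Fin m)) :
    wso m N ((finRotate m)⁻¹ * α * finRotate m) = wso m N α :=
  wso_conj_finRotate_general m N α
end

section
/- Let m and N be positive integers. The trace of the N×N complex matrix ∑_{i : {1,…,m} → {1,…,N}} F_{i(1), i(2)} · F_{i(2), i(3)} ⋯ F_{i(m−1), i(m)} · F_{i(m), i(1)} (the matrix product over the standard cyclic permutation 1↦2↦⋯↦m↦1) equals (N−1)^m + 1 − N if m is odd, and (N−1)^m − 1 + N² if m is even. (Equivalently, the value of the so(N)-weight system in the standard representation, which is (1/N) times this trace, on the standard cycle of length m is ((N−1)^m + 1 − N)/N for m odd and ((N−1)^m − 1 + N²)/N for m even.) -/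
/-!
Arrange the generators into the block matrix `M = (F_ab)_{a,b}` with entries in `Mat_N(ℂ)`.
Summing the cyclic products over all index functions is taking the block trace of `M ^ m`, so the
quantity is `tr (tr (M ^ m))`. Now `M = E - T` with `E = (E_ab)` and `T = (E_{b̄ ā})`, where
`ā = N + 1 - a`, and these satisfy `E² = N E`, `E T = T E = E`, `T² = 1`. Hence
`M ^ m = c E + (-1)^m T^m` with `N c = (N - 1)^m - (-1)^m`, and the double traces are
`tr tr E = tr tr T = N`, `tr tr 1 = N²`.
-/

open scoped BigOperators

open Finset

theorem Fin.cons_finRotate {α : Type*} {n : ℕ} (a : α) (j : Fin n → α) (k : Fin (n + 1)) :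
    Fin.cons (α := fun _ => α) a j (finRotate (n + 1) k) = Fin.snoc (α := fun _ => α) j a k := by
  induction k using Fin.lastCases with
  | last => simp
  | cast l => simp [Fin.coeSucc_eq_succ]

namespace Matrix

section CyclicSums

variable {ι R : Type*} [Fintype ι] [DecidableEq ι] [Semiring R]

theorem pow_succ_apply_eq_sum_paths (M : Matrix ι ι R) (n : ℕ) (a b : ι) :
    (M ^ (n + 1)) a b = ∑ j : Fin n → ι, (List.ofFn fun k : Fin (n + 1) =>
      M (Fin.cons (α := fun _ => ι) a j k) (Fin.snoc (α := fun _ => ι) j b k)).prod := by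
  induction n generalizing b with
  | zero => simp [Fin.snoc]
  | succ n ih =>
    rw [pow_succ, mul_apply, ← (Fin.snocEquiv fun _ => ι).sum_comp, Fintype.sum_prod_type]
    refine sum_congr rfl fun c _ => ?_
    rw [ih, sum_mul]
    refine sum_congr rfl fun j _ => ?_
    rw [List.ofFn_succ' (n := n + 1), List.prod_concat]
    simp only [Fin.snocEquiv, Equiv.coe_fn_mk, Fin.cons_snoc_eq_snoc_cons, Fin.snoc_castSucc,
      Fin.snoc_last]

theorem trace_pow_eq_sum_cycles (M : Matrix ι ι R) {m : ℕ} (hm : m ≠ 0) :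
    trace (M ^ m) = ∑ i : Fin m → ι,
      ((List.finRange m).map fun k => M (i k) (i (finRotate m k))).prod := by
  obtain ⟨n, rfl⟩ := Nat.exists_eq_succ_of_ne_zero hm
  rw [trace, ← (Fin.consEquiv fun _ => ι).sum_comp, Fintype.sum_prod_type]
  refine sum_congr rfl fun a _ => ?_
  rw [diag_apply, pow_succ_apply_eq_sum_paths]
  refine sum_congr rfl fun j _ => ?_
  simp only [List.ofFn_eq_map, Fin.consEquiv_apply, Fin.cons_finRotate]

end CyclicSums

section UnitBlocks

variable (ι R : Type*) [Fintype ι] [DecidableEq ι] [Semiring R]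

def unitBlocks : Matrix ι ι (Matrix ι ι R) := of fun a b => single a b 1

def twistedUnitBlocks (σ : ι → ι) : Matrix ι ι (Matrix ι ι R) :=
  of fun a b => single (σ b) (σ a) 1

variable {ι} {σ : ι → ι}

theorem unitBlocks_mul_self :
    unitBlocks ι R * unitBlocks ι R = Fintype.card ι • unitBlocks ι R := by
  ext1 a b
  simp [unitBlocks, mul_apply]

theorem unitBlocks_mul_twistedUnitBlocks (hσ : Function.Involutive σ) :
    unitBlocks ι R * twistedUnitBlocks ι R σ = unitBlocks ι R := by
  ext1 a b
  rw [mul_apply, sum_eq_single (σ b)]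
  · simp [unitBlocks, twistedUnitBlocks, hσ b]
  · intro c _ hc
    simp [unitBlocks, twistedUnitBlocks, single_mul_single_of_ne _ _ _ _ hc]
  · simp

theorem twistedUnitBlocks_mul_unitBlocks (hσ : Function.Involutive σ) :
    twistedUnitBlocks ι R σ * unitBlocks ι R = unitBlocks ι R := by
  ext1 a b
  rw [mul_apply, sum_eq_single (σ a)]
  · simp [unitBlocks, twistedUnitBlocks, hσ a]
  · intro c _ hc
    simp [unitBlocks, twistedUnitBlocks, single_mul_single_of_ne _ _ _ _ (Ne.symm hc)]
  · simp

theorem twistedUnitBlocks_mul_self (hσ : Function.Involutive σ) :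
    twistedUnitBlocks ι R σ * twistedUnitBlocks ι R σ = 1 := by
  ext1 a b
  rw [mul_apply]
  by_cases hab : a = b
  · subst hab
    simpa [twistedUnitBlocks, sum_single_one] using
      (Equiv.ofBijective σ hσ.bijective).sum_comp fun j => single j j (1 : R)
  · simp [twistedUnitBlocks, one_apply_ne hab,
      single_mul_single_of_ne _ _ _ _ (hσ.injective.ne hab)]

theorem trace_trace_unitBlocks : trace (trace (unitBlocks ι R)) = Fintype.card ι := by
  rw [trace.eq_1 (unitBlocks ι R)]
  simp [trace_sum, unitBlocks]

theorem trace_trace_twistedUnitBlocks :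
    trace (trace (twistedUnitBlocks ι R σ)) = Fintype.card ι := by
  rw [trace.eq_1 (twistedUnitBlocks ι R σ)]
  simp [trace_sum, twistedUnitBlocks]

theorem trace_trace_one : trace (trace (1 : Matrix ι ι (Matrix ι ι R))) = Fintype.card ι ^ 2 := by
  rw [trace_one, ← nsmul_one, trace_smul, trace_one, nsmul_eq_mul, sq]

end UnitBlocks

end Matrix

section PowerFormula

variable {A : Type*} [Ring A] {P Q : A}

theorem pow_mul_eq_of_mul_eq (hQP : Q * P = P) (m : ℕ) : Q ^ m * P = P := by
  induction m with
  | zero => simp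
  | succ m ih => rw [pow_succ, mul_assoc, hQP, ih]

theorem sub_pow_eq_geom_sum_smul_add (n : ℕ) (hPP : P * P = n • P) (hPQ : P * Q = P)
    (hQP : Q * P = P) (m : ℕ) :
    (P - Q) ^ m =
      (∑ i ∈ range m, (-1 : ℤ) ^ i * ((n : ℤ) - 1) ^ (m - 1 - i)) • P + (-1 : ℤ) ^ m • Q ^ m := by
  induction m with
  | zero => simp
  | succ m ih =>
    rw [pow_succ, ih, add_mul, smul_mul_assoc, smul_mul_assoc, mul_sub, mul_sub, hPP, hPQ,
      pow_mul_eq_of_mul_eq hQP, ← pow_succ, Nat.add_sub_cancel, geom_sum₂_succ_eq]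
    module

theorem pow_eq_ite_of_mul_self_eq_one (hQ : Q * Q = 1) (m : ℕ) :
    Q ^ m = if Even m then 1 else Q := by
  obtain ⟨k, rfl | rfl⟩ := Nat.even_or_odd' m
  · simp [pow_mul, sq, hQ]
  · simp [pow_succ, pow_mul, hQ, Nat.not_even_bit1]

end PowerFormula

theorem of_soF (N : ℕ) :
    Matrix.of (soF N) = Matrix.unitBlocks (Fin N) ℂ - Matrix.twistedUnitBlocks (Fin N) ℂ Fin.rev :=
  rfl

open Matrix in
theorem trace_wso_standard_cycle_general (m N : ℕ) (hm : 0 < m) :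
    Matrix.trace
        (∑ i : Fin m → Fin N,
          ((List.finRange m).map fun k => soF N (i k) (i (finRotate m k))).prod)
      = if Odd m then ((N : ℂ) - 1) ^ m + 1 - N
        else ((N : ℂ) - 1) ^ m - 1 + (N : ℂ) ^ 2 := by
  have hrev : Function.Involutive (@Fin.rev N) := Fin.rev_rev
  have hEE : unitBlocks (Fin N) ℂ * unitBlocks (Fin N) ℂ = N • unitBlocks (Fin N) ℂ := by
    simpa using unitBlocks_mul_self (ι := Fin N) ℂ
  set c := ∑ i ∈ range m, (-1 : ℤ) ^ i * ((N : ℤ) - 1) ^ (m - 1 - i) with hc_def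
  have hc : (c : ℂ) * N = (N - 1) ^ m - (-1) ^ m := by
    have := congrArg (Int.cast (R := ℂ)) (geom_sum₂_mul (-1 : ℤ) ((N : ℤ) - 1) m)
    rw [hc_def]
    push_cast at this ⊢
    linear_combination -this
  calc _ = trace (trace (of (soF N) ^ m)) := by
        simp only [trace_pow_eq_sum_cycles _ hm.ne', of_apply]
    _ = c * N + (-1) ^ m * trace (trace (twistedUnitBlocks (Fin N) ℂ Fin.rev ^ m)) := by
        rw [of_soF, sub_pow_eq_geom_sum_smul_add N hEE (unitBlocks_mul_twistedUnitBlocks ℂ hrev)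
          (twistedUnitBlocks_mul_unitBlocks ℂ hrev), trace_add, trace_add, trace_smul,
          trace_smul, trace_smul, trace_smul, trace_trace_unitBlocks, Fintype.card_fin]
        simp only [zsmul_eq_mul, Int.cast_pow, Int.cast_neg, Int.cast_one, c]
    _ = _ := by
        rw [pow_eq_ite_of_mul_self_eq_one (twistedUnitBlocks_mul_self ℂ hrev), hc]
        rcases Nat.even_or_odd m with h | h
        · rw [if_pos h, if_neg (Nat.not_odd_iff_even.mpr h), trace_trace_one, Fintype.card_fin,
            h.neg_one_pow]
          ring
        · rw [if_neg (Nat.not_even_iff_odd.mpr h), if_pos h, trace_trace_twistedUnitBlocks,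
            Fintype.card_fin, h.neg_one_pow]
          ring

/-- The trace of `∑_i F_{i 1, i 2} F_{i 2, i 3} ⋯ F_{i m, i 1}` (the product taken along the
standard cyclic permutation `σ = finRotate m`, sending `k` to `k + 1` mod `m`) equals
`(N−1)^m + 1 − N` for `m` odd and `(N−1)^m − 1 + N²` for `m` even. -/
theorem trace_wso_standard_cycle (m N : ℕ) (hm : 0 < m) (hN : 0 < N) :
    Matrix.trace
        (∑ i : Fin m → Fin N,
          ((List.finRange m).map fun k => soF N (i k) (i (finRotate m k))).prod)
      = if Odd m then ((N : ℂ) - 1) ^ m + 1 - N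
        else ((N : ℂ) - 1) ^ m - 1 + (N : ℂ) ^ 2 :=
  trace_wso_standard_cycle_general m N hm
end

section
/- Let m be a prime number and let σ ∈ S_m be the standard long cycle. Then the number of orbits of the conjugation action of the cyclic group ⟨σ⟩ on the set of cyclic permutations of m elements equals ((m−1)! − (m−1))/m + (m−1). Moreover, exactly m−1 of these orbits have length 1, namely those of the powers σ^s for s = 1, …, m−1 (the cycles consisting of steps of constant length), and all remaining orbits have length m. -/
/-!
The classes of `rotSetoid m` are the orbits of the conjugation action of `⟨σ⟩`, a group of prime
order `m`, so every class has one or `m` elements. A class is a singleton exactly when its element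
commutes with `σ`; the centralizer of a full cycle is the cyclic group it generates, whose
`m`-cycles are the `m - 1` nontrivial powers of `σ`. Summing class sizes over the `(m - 1)!` cycles gives
`(m - 1)! = (m - 1) + m (N - (m - 1))` for the number `N` of classes.
-/

open scoped BigOperators

/-- Rotational equivalence on cyclic permutations of `m` elements: `α₁ ∼ α₂` iff
`α₂ = σ^{−k} α₁ σ^{k}` for some integer `k`, where `σ = finRotate m` is the standard
long cycle.  The classes are the orbits of the conjugation action of `⟨σ⟩` on the set of
`m`-cycles in `S_m`. -/
def rotSetoid (m : ℕ) :
    Setoid {α : Equiv.Perm (Fin m) // α.IsCycle ∧ α.support.card = m} where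
  r a b := ∃ k : ℤ,
    (b : Equiv.Perm (Fin m)) = (finRotate m) ^ (-k) * (a : Equiv.Perm (Fin m)) * (finRotate m) ^ k
  iseqv := by
    constructor
    · intro a; exact ⟨0, by simp⟩
    · rintro a b ⟨k, hk⟩
      exact ⟨-k, by rw [hk]; group⟩
    · rintro a b c ⟨k, hk⟩ ⟨l, hl⟩
      exact ⟨k + l, by rw [hl, hk]; group⟩

/-- The number of orbits of the conjugation action of `⟨σ⟩` on the set of cyclic
permutations of `m` elements; this is the dimension of the space `H_{m¹}`. -/
noncomputable def cyclicOrbitCount (m : ℕ) : ℕ :=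
  Nat.card (Quotient (rotSetoid m))

open Equiv Equiv.Perm MulAction Finset
open scoped Nat

theorem Finset.card_eq_of_forall_eq_one_or_eq {ι : Type*} (s : Finset ι) (n : ι → ℕ) {p : ℕ}
    (hp : p ≠ 0) (h : ∀ i ∈ s, n i = 1 ∨ n i = p) :
    (#s : ℚ) = ((∑ i ∈ s, (n i : ℚ)) - #{i ∈ s | n i = 1}) / p + #{i ∈ s | n i = 1} := by
  have hn : ∀ i ∈ s, (n i : ℚ) = p + (1 - p) * if n i = 1 then 1 else 0 := by
    intro i hi
    rcases h i hi with h1 | h1 <;> by_cases hp1 : p = 1 <;> simp [h1, hp1]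
  rw [sum_congr rfl hn, sum_add_distrib, ← mul_sum, sum_boole, sum_const, nsmul_eq_mul]
  field_simp
  ring

theorem Setoid.card_quotient_eq_of_card_fiber_eq_one_or {α : Type*} [Finite α] (s : Setoid α)
    {p : ℕ} (hp : p ≠ 0)
    (h : ∀ q : Quotient s, Nat.card {a // Quotient.mk s a = q} = 1 ∨
      Nat.card {a // Quotient.mk s a = q} = p) :
    (Nat.card (Quotient s) : ℚ) =
      ((Nat.card α : ℚ) - Nat.card {q : Quotient s | Nat.card {a // Quotient.mk s a = q} = 1}) / p
        + Nat.card {q : Quotient s | Nat.card {a // Quotient.mk s a = q} = 1} := by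
  classical
  have := Fintype.ofFinite α
  have hα : Nat.card α = ∑ q : Quotient s, Nat.card {a // Quotient.mk s a = q} := by
    rw [← Nat.card_congr (Equiv.sigmaFiberEquiv (Quotient.mk s)), Nat.card_sigma]
  rw [hα, Nat.card_eq_fintype_card, ← card_univ, Nat.card_coe_set_eq,
    Set.ncard_eq_toFinset_card', Set.toFinset_ofPred]
  push_cast
  exact card_eq_of_forall_eq_one_or_eq _ _ hp fun q _ => h q

namespace MulAction

variable {G α : Type*} [Group G] [MulAction G α]

theorem card_orbit_eq_one_or_eq_of_card_eq_prime {p : ℕ} (hp : p.Prime) (hG : Nat.card G = p)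
    (a : α) : Nat.card (orbit G a) = 1 ∨ Nat.card (orbit G a) = p := by
  refine hp.eq_one_or_self_of_dvd _ ?_
  rw [Nat.card_coe_set_eq, ← index_stabilizer, ← hG]
  exact (stabilizer G a).index_dvd_card

theorem card_orbit_eq_one_iff_mem_fixedPoints {a : α} :
    Nat.card (orbit G a) = 1 ↔ a ∈ fixedPoints G α := by
  rw [Nat.card_eq_one_iff_unique, Set.subsingleton_coe, subsingleton_orbit_iff_mem_fixedPoints,
    and_iff_left ⟨⟨a, mem_orbit_self a⟩⟩]

theorem card_fiber_orbitRel_mk (a : α) :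
    Nat.card {b // Quotient.mk (orbitRel G α) b = Quotient.mk (orbitRel G α) a} =
      Nat.card (orbit G a) :=
  Nat.card_congr (Equiv.subtypeEquivRight fun _ => by rw [Quotient.eq, orbitRel_apply])

theorem card_setOf_card_fiber_orbitRel_eq_one :
    Nat.card {q : Quotient (orbitRel G α) | Nat.card {b // Quotient.mk _ b = q} = 1} =
      Nat.card (fixedPoints G α) := by
  have himage : {q : Quotient (orbitRel G α) | Nat.card {b // Quotient.mk _ b = q} = 1} =
      Quotient.mk _ '' fixedPoints G α := by
    ext q
    constructor
    · induction q using Quotient.inductionOn with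
      | h a =>
        intro hq
        rw [Set.mem_ofPred_eq, card_fiber_orbitRel_mk, card_orbit_eq_one_iff_mem_fixedPoints] at hq
        exact ⟨a, hq, rfl⟩
    · rintro ⟨a, ha, rfl⟩
      rwa [Set.mem_ofPred_eq, card_fiber_orbitRel_mk, card_orbit_eq_one_iff_mem_fixedPoints]
  rw [himage, Nat.card_image_of_injOn]
  intro a _ b hb hab
  obtain ⟨g, rfl⟩ := orbitRel_apply.mp (Quotient.exact hab)
  exact hb g

end MulAction

theorem mem_zpowers_and_ne_one_iff {G : Type*} [Group G] [Finite G] {c g : G} :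
    g ∈ Subgroup.zpowers c ∧ g ≠ 1 ↔ ∃ s, 1 ≤ s ∧ s ≤ orderOf c - 1 ∧ g = c ^ s := by
  classical
  have hpos := orderOf_pos c
  simp only [mem_zpowers_iff_mem_range_orderOf, mem_image, mem_range]
  constructor
  · rintro ⟨⟨s, hs, rfl⟩, hne⟩
    have hs0 : s ≠ 0 := by rintro rfl; exact hne (pow_zero c)
    exact ⟨s, by omega, by omega, rfl⟩
  · rintro ⟨s, hs1, hs2, rfl⟩
    exact ⟨⟨s, by omega, rfl⟩, pow_ne_one_of_lt_orderOf (by omega) (by omega)⟩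

namespace Equiv.Perm

variable {α : Type*} [Fintype α] [DecidableEq α]

theorem isCycle_and_card_support_eq_iff_cycleType_eq {g : Perm α} {n : ℕ} :
    g.IsCycle ∧ #g.support = n ↔ g.cycleType = {n} := by
  constructor
  · rintro ⟨hg, rfl⟩
    exact hg.cycleType
  · intro h
    have hg : g.IsCycle := by rw [← card_cycleType_eq_one, h]; rfl
    exact ⟨hg, by simpa [h] using (sum_cycleType g).symm⟩

theorem card_isCycle_card_support_eq {n : ℕ} (hn : 2 ≤ n) (hnα : n ≤ Fintype.card α) :
    Nat.card {g : Perm α // g.IsCycle ∧ #g.support = n} = (n - 1)! * (Fintype.card α).choose n := by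
  simp_rw [isCycle_and_card_support_eq_iff_cycleType_eq]
  rw [Nat.card_eq_fintype_card, Fintype.card_subtype, card_of_cycleType_singleton hn hnα]

instance {n : ℕ} : MulAction (ConjAct (Perm α)) {g : Perm α // g.IsCycle ∧ #g.support = n} where
  smul c g := ⟨c • (g : Perm α), by
    rw [ConjAct.smul_def]; exact ⟨g.2.1.conj, by rw [card_support_conj, g.2.2]⟩⟩
  one_smul g := Subtype.ext (one_smul _ (g : Perm α))
  mul_smul c d g := Subtype.ext (mul_smul c d (g : Perm α))

@[simp]
theorem coe_conjAct_smul {n : ℕ} (c : ConjAct (Perm α))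
    (g : {g : Perm α // g.IsCycle ∧ #g.support = n}) : ((c • g : _) : Perm α) = c • (g : Perm α) :=
  rfl

theorem mem_fixedPoints_zpowers_toConjAct_iff_commute {n : ℕ} {c : Perm α}
    {g : {g : Perm α // g.IsCycle ∧ #g.support = n}} :
    g ∈ fixedPoints (Subgroup.zpowers (ConjAct.toConjAct c)) _ ↔ Commute (g : Perm α) c := by
  constructor
  · intro h
    have hc := congrArg Subtype.val (h ⟨_, Subgroup.mem_zpowers _⟩)
    simp only [Subgroup.mk_smul, coe_conjAct_smul, ConjAct.toConjAct_smul] at hc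
    exact (mul_inv_eq_iff_eq_mul.mp hc).symm
  · rintro h ⟨_, hk⟩
    obtain ⟨k, rfl⟩ := Subgroup.mem_zpowers_iff.mp hk
    apply Subtype.ext
    rw [Subgroup.mk_smul, coe_conjAct_smul, ← map_zpow, ConjAct.toConjAct_smul,
      ← (h.zpow_right k).eq, mul_inv_cancel_right]

theorem IsCycle.commute_iff_mem_zpowers {c g : Perm α} (hc : c.IsCycle) (hsupp : c.support = univ) :
    Commute g c ↔ g ∈ Subgroup.zpowers c := by
  refine ⟨fun h => ?_, fun h => ?_⟩
  · obtain ⟨hg, hmem⟩ := hc.commute_iff.mp h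
    rwa [ofSubtype_subtypePerm hg (fun x _ => by simp [hsupp])] at hmem
  · obtain ⟨k, rfl⟩ := Subgroup.mem_zpowers_iff.mp h
    exact (Commute.refl c).zpow_left k

theorem IsCycle.pow_isCycle_and_card_support {c : Perm α} (hc : c.IsCycle) (hp : (#c.support).Prime)
    {s : ℕ} (hs0 : 0 < s) (hs : s < #c.support) :
    (c ^ s).IsCycle ∧ #(c ^ s).support = #c.support := by
  have hcop : s.Coprime (orderOf c) := by
    rw [hc.orderOf]
    exact Nat.coprime_comm.mp ((hp.coprime_iff_not_dvd).mpr (Nat.not_dvd_of_pos_of_lt hs0 hs))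
  exact ⟨hc.pow_iff.mpr hcop, by rw [support_pow_coprime hcop]⟩

theorem IsCycle.mem_fixedPoints_zpowers_toConjAct_iff {c : Perm α} (hc : c.IsCycle)
    (hsupp : c.support = univ) {n : ℕ} {g : {g : Perm α // g.IsCycle ∧ #g.support = n}} :
    g ∈ fixedPoints (Subgroup.zpowers (ConjAct.toConjAct c)) _ ↔
      (g : Perm α) ∈ Subgroup.zpowers c :=
  mem_fixedPoints_zpowers_toConjAct_iff_commute.trans (hc.commute_iff_mem_zpowers hsupp)

theorem IsCycle.card_fixedPoints_zpowers_toConjAct {c : Perm α} (hc : c.IsCycle)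
    (hsupp : c.support = univ) {n : ℕ} (hn : Fintype.card α = n) (hp : n.Prime) :
    Nat.card (fixedPoints (Subgroup.zpowers (ConjAct.toConjAct c))
      {g : Perm α // g.IsCycle ∧ #g.support = n}) = n - 1 := by
  have hcn : #c.support = n := by rw [hsupp, card_univ, hn]
  have himage : Subtype.val '' fixedPoints (Subgroup.zpowers (ConjAct.toConjAct c))
      {g : Perm α // g.IsCycle ∧ #g.support = n} = (Subgroup.zpowers c : Set (Perm α)) \ {1} := by
    ext g
    constructor
    · rintro ⟨g, hg, rfl⟩
      exact ⟨(hc.mem_fixedPoints_zpowers_toConjAct_iff hsupp).mp hg, g.2.1.ne_one⟩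
    · rintro ⟨hg, hne⟩
      obtain ⟨s, hs1, hs2, rfl⟩ := mem_zpowers_and_ne_one_iff.mp ⟨hg, hne⟩
      rw [hc.orderOf, hcn] at hs2
      have hcyc := hc.pow_isCycle_and_card_support (hcn ▸ hp) (s := s) (by omega) (by omega)
      exact ⟨⟨c ^ s, hcyc.1, hcyc.2.trans hcn⟩,
        (hc.mem_fixedPoints_zpowers_toConjAct_iff hsupp).mpr hg, rfl⟩
  rw [← Nat.card_image_of_injective Subtype.val_injective, himage, Nat.card_coe_set_eq,
    Set.ncard_sdiff_singleton_of_mem (Subgroup.one_mem _), ← Nat.card_coe_set_eq,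
    SetLike.coe_sort_coe, Nat.card_zpowers, hc.orderOf, hcn]

end Equiv.Perm

theorem rotSetoid_eq_orbitRel (m : ℕ) :
    rotSetoid m = orbitRel (Subgroup.zpowers (ConjAct.toConjAct (finRotate m))) _ := by
  refine Setoid.ext fun a b => ?_
  rw [orbitRel_apply, mem_orbit_iff]
  constructor
  · rintro ⟨k, hk⟩
    refine ⟨⟨ConjAct.toConjAct (finRotate m ^ k),
      by rw [map_zpow]; exact zpow_mem (Subgroup.mem_zpowers _) k⟩, Subtype.ext ?_⟩
    rw [Subgroup.mk_smul, coe_conjAct_smul, ConjAct.toConjAct_smul, hk]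
    group
  · rintro ⟨⟨_, hg⟩, rfl⟩
    obtain ⟨k, rfl⟩ := Subgroup.mem_zpowers_iff.mp hg
    refine ⟨k, ?_⟩
    rw [Subgroup.mk_smul, coe_conjAct_smul, ← map_zpow, ConjAct.toConjAct_smul]
    group

theorem orderOf_finRotate_of_le {m : ℕ} (hm : 2 ≤ m) : orderOf (finRotate m) = m := by
  rw [(isCycle_finRotate_of_le hm).orderOf, support_finRotate_of_le hm, card_univ,
    Fintype.card_fin]

theorem card_fiber_rotSetoid_mk_eq_one_iff {m : ℕ} (hm : 2 ≤ m)
    (a : {α : Perm (Fin m) // α.IsCycle ∧ #α.support = m}) :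
    Nat.card {b // Quotient.mk (rotSetoid m) b = Quotient.mk (rotSetoid m) a} = 1 ↔
      (a : Perm (Fin m)) ∈ Subgroup.zpowers (finRotate m) := by
  rw [rotSetoid_eq_orbitRel, card_fiber_orbitRel_mk, card_orbit_eq_one_iff_mem_fixedPoints,
    (isCycle_finRotate_of_le hm).mem_fixedPoints_zpowers_toConjAct_iff (support_finRotate_of_le hm)]

theorem card_fiber_rotSetoid_eq_one_or_eq {m : ℕ} (hm : m.Prime) (q : Quotient (rotSetoid m)) :
    Nat.card {a // Quotient.mk (rotSetoid m) a = q} = 1 ∨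
      Nat.card {a // Quotient.mk (rotSetoid m) a = q} = m := by
  have hG : Nat.card (Subgroup.zpowers (ConjAct.toConjAct (finRotate m))) = m := by
    rw [Nat.card_zpowers, ConjAct.toConjAct.orderOf_eq, orderOf_finRotate_of_le hm.two_le]
  induction q using Quotient.inductionOn with
  | h a =>
    rw [rotSetoid_eq_orbitRel, card_fiber_orbitRel_mk]
    exact card_orbit_eq_one_or_eq_of_card_eq_prime hm hG a

theorem card_setOf_card_fiber_rotSetoid_eq_one {m : ℕ} (hm : m.Prime) :
    Nat.card {q : Quotient (rotSetoid m) | Nat.card {a // Quotient.mk (rotSetoid m) a = q} = 1} =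
      m - 1 := by
  rw [rotSetoid_eq_orbitRel, card_setOf_card_fiber_orbitRel_eq_one,
    (isCycle_finRotate_of_le hm.two_le).card_fixedPoints_zpowers_toConjAct
      (support_finRotate_of_le hm.two_le) (Fintype.card_fin m) hm]

/-- For `m` prime: the number of rotational classes of `m`-cycles equals
`((m−1)! − (m−1))/m + (m−1)`; exactly `m − 1` of the orbits have length `1`, namely the
classes of the powers `σ^s`, `s = 1, …, m−1`, and every other orbit has length `m`. -/
theorem cyclicOrbitCount_prime (m : ℕ) (hm : m.Prime) :
    ((cyclicOrbitCount m : ℚ)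
        = ((Nat.factorial (m - 1) : ℚ) - (m - 1)) / m + (m - 1))
    ∧ (∀ q : Quotient (rotSetoid m),
        Nat.card {a // Quotient.mk (rotSetoid m) a = q} = 1 ∨
        Nat.card {a // Quotient.mk (rotSetoid m) a = q} = m)
    ∧ ({q : Quotient (rotSetoid m) | Nat.card {a // Quotient.mk (rotSetoid m) a = q} = 1}
        = {q : Quotient (rotSetoid m) | ∃ (s : ℕ) (_ : 1 ≤ s) (_ : s ≤ m - 1)
            (h : ((finRotate m) ^ s).IsCycle ∧ ((finRotate m) ^ s).support.card = m),
            q = Quotient.mk (rotSetoid m) ⟨(finRotate m) ^ s, h⟩})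
    ∧ Nat.card
        {q : Quotient (rotSetoid m) | Nat.card {a // Quotient.mk (rotSetoid m) a = q} = 1}
        = m - 1 := by
  have hm2 := hm.two_le
  refine ⟨?_, card_fiber_rotSetoid_eq_one_or_eq hm, ?_, card_setOf_card_fiber_rotSetoid_eq_one hm⟩
  · rw [cyclicOrbitCount, Setoid.card_quotient_eq_of_card_fiber_eq_one_or _ hm.ne_zero
      (card_fiber_rotSetoid_eq_one_or_eq hm), card_setOf_card_fiber_rotSetoid_eq_one hm,
      card_isCycle_card_support_eq hm2 (Fintype.card_fin m).ge, Fintype.card_fin, Nat.choose_self,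
      mul_one, Nat.cast_sub hm.one_le, Nat.cast_one]
  · ext q
    constructor
    · induction q using Quotient.inductionOn with
      | h a =>
        intro ha
        obtain ⟨s, hs1, hs2, hs⟩ := mem_zpowers_and_ne_one_iff.mp
          ⟨(card_fiber_rotSetoid_mk_eq_one_iff hm2 a).mp ha, a.2.1.ne_one⟩
        rw [orderOf_finRotate_of_le hm2] at hs2
        exact ⟨s, hs1, hs2, hs ▸ a.2, congrArg _ (Subtype.ext hs)⟩
    · rintro ⟨s, -, -, h, rfl⟩
      exact (card_fiber_rotSetoid_mk_eq_one_iff hm2 _).mpr (pow_mem (Subgroup.mem_zpowers _) s)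
end

section
/- Let m be a positive integer. The number of positive permutations of {1,…,m} equals the number of partitions of the set {1,…,m} into nonempty blocks (the m-th Bell number). That is, there is a one-to-one correspondence between set partitions of {1,…,m} and positive permutations in S_m. -/
def accents {m : ℕ} (α : Equiv.Perm (Fin m)) : ℕ :=
  (Finset.univ.filter fun i : Fin m => i < α i).card

def Positive {m : ℕ} (α : Equiv.Perm (Fin m)) : Prop :=
  accents α = m - numOrbits α

/-!
The largest element of an orbit is never an accent, so `a(α) ≤ m - c(α)`, with equality
exactly when every other element of every orbit is an accent. On an orbit `B` this forces `α`
to be the increasing cycle of `B`, which sends each element to the next larger one and `max B`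
to `min B`: read through the order isomorphism `Fin #B ≃o B`, the permutation
`α * (finRotate #B)⁻¹` moves no element down, so it is the identity. Hence a positive
permutation is determined by its orbit partition, and every partition is the orbit partition
of the product of the increasing cycles on its blocks.
-/

open Finset Equiv

theorem Fin.lt_finRotate_of_lt {n : ℕ} {i j : Fin n} (h : i < j) : i < finRotate n i := by
  obtain _ | n := n
  · exact i.elim0
  · exact (lt_finRotate_iff_ne_last i).2 (Fin.ne_last_of_lt h)

namespace Equiv.Perm

theorem eq_one_of_forall_le_apply {X : Type*} [LinearOrder X] [Finite X] {g : Perm X}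
    (h : ∀ x, x ≤ g x) : g = 1 := by
  ext x
  induction x using WellFoundedGT.induction with
  | _ x ih =>
    by_contra hx
    exact hx (g.injective (ih _ (lt_of_le_of_ne (h x) (Ne.symm hx))))

theorem eq_finRotate_of_forall_lt_apply {n : ℕ} {f : Perm (Fin n)}
    (h : ∀ i j, i < j → i < f i) : f = finRotate n := by
  rw [← mul_inv_eq_one]
  refine eq_one_of_forall_le_apply fun j => ?_
  obtain _ | n := n
  · exact j.elim0
  by_cases hj : j = 0
  · simp [hj]
  · have hi : ((finRotate _).symm j : ℕ) = j - 1 := coe_finRotate_symm_of_ne_zero hj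
    have hj' : (j : ℕ) ≠ 0 := Fin.val_ne_zero_iff.2 hj
    have := h ((finRotate _).symm j) j (by rw [Fin.lt_def, hi]; omega)
    rw [Fin.lt_def, hi] at this
    rw [Fin.le_def, mul_apply, inv_def]
    omega

theorem sameCycle_finRotate {n : ℕ} (i j : Fin n) : (finRotate n).SameCycle i j := by
  rcases lt_or_ge n 2 with hn | hn
  · have : Subsingleton (Fin n) := Fin.subsingleton_iff_le_one.2 (by omega)
    rw [Subsingleton.elim i j]
  · have hsupp := support_finRotate_of_le hn
    exact (isCycle_finRotate_of_le hn).sameCycle (mem_support.1 (hsupp ▸ mem_univ i))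
      (mem_support.1 (hsupp ▸ mem_univ j))

end Equiv.Perm

namespace Finset

variable {X : Type*} [LinearOrder X] (B : Finset X)

def increasingCycle : Perm X :=
  (finRotate #B).extendDomain (B.orderIsoOfFin rfl).toEquiv

variable {B}

theorem increasingCycle_orderIsoOfFin (i : Fin #B) :
    B.increasingCycle (B.orderIsoOfFin rfl i) = B.orderIsoOfFin rfl (finRotate _ i) :=
  Perm.extendDomain_apply_image _ _ i

theorem exists_orderIsoOfFin_eq {x : X} (hx : x ∈ B) : ∃ i, (B.orderIsoOfFin rfl i : X) = x :=
  ⟨(B.orderIsoOfFin rfl).symm ⟨x, hx⟩, by simp⟩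

theorem increasingCycle_apply_mem_iff {x : X} : B.increasingCycle x ∈ B ↔ x ∈ B := by
  by_cases hx : x ∈ B
  · obtain ⟨i, rfl⟩ := exists_orderIsoOfFin_eq hx
    rw [increasingCycle_orderIsoOfFin]
    exact iff_of_true (Subtype.prop _) hx
  · rw [increasingCycle, Perm.extendDomain_apply_not_subtype _ _ hx]

theorem lt_increasingCycle_apply {x y : X} (hx : x ∈ B) (hy : y ∈ B) (hxy : x < y) :
    x < B.increasingCycle x := by
  obtain ⟨i, rfl⟩ := exists_orderIsoOfFin_eq hx
  obtain ⟨j, rfl⟩ := exists_orderIsoOfFin_eq hy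
  rw [Subtype.coe_lt_coe, OrderIso.lt_iff_lt] at hxy
  rw [increasingCycle_orderIsoOfFin, Subtype.coe_lt_coe, OrderIso.lt_iff_lt]
  exact Fin.lt_finRotate_of_lt hxy

theorem sameCycle_increasingCycle {x y : X} (hx : x ∈ B) (hy : y ∈ B) :
    B.increasingCycle.SameCycle x y := by
  obtain ⟨i, rfl⟩ := exists_orderIsoOfFin_eq hx
  obtain ⟨j, rfl⟩ := exists_orderIsoOfFin_eq hy
  exact (Perm.sameCycle_finRotate i j).extendDomain

theorem apply_eq_increasingCycle {σ : Perm X} (hB : ∀ x, σ x ∈ B ↔ x ∈ B)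
    (hσ : ∀ x ∈ B, ∀ y ∈ B, x < y → x < σ x) {x : X} (hx : x ∈ B) :
    σ x = B.increasingCycle x := by
  have hrot : (B.orderIsoOfFin rfl).symm.toEquiv.permCongr (σ.subtypePerm hB) = finRotate #B := by
    refine Perm.eq_finRotate_of_forall_lt_apply fun i j hij => ?_
    have := hσ _ (Subtype.prop _) _ (Subtype.prop _) ((B.orderIsoOfFin rfl).strictMono hij)
    simpa [OrderIso.lt_symm_apply, ← Subtype.coe_lt_coe] using this
  obtain ⟨i, rfl⟩ := exists_orderIsoOfFin_eq hx
  rw [increasingCycle_orderIsoOfFin, ← hrot]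
  simp

end Finset

namespace Finpartition

section

variable {X : Type*} [DecidableEq X] {s : Finset X} (P : Finpartition s)

theorem parts_eq_image_part : P.parts = s.image P.part := by
  ext t
  rw [mem_image]
  exact ⟨fun ht => P.part_surjOn ht, fun ⟨a, ha, hat⟩ => hat ▸ P.part_mem.2 ha⟩

theorem ext_part {Q : Finpartition s} (h : ∀ a, P.part a = Q.part a) : P = Q := by
  ext1
  rw [parts_eq_image_part, parts_eq_image_part]
  exact image_congr fun a _ => h a

end

variable {X : Type*} [LinearOrder X] [Fintype X] (P : Finpartition (univ : Finset X))

theorem part_increasingCycle_apply (x : X) :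
    P.part ((P.part x).increasingCycle x) = P.part x :=
  P.part_eq_of_mem (P.part_mem.2 (mem_univ x))
    (increasingCycle_apply_mem_iff.2 (P.mem_part (mem_univ x)))

noncomputable def increasingCycles : Perm X :=
  Equiv.ofBijective (fun x => (P.part x).increasingCycle x) <|
    Finite.injective_iff_bijective.1 fun x y h => by
      have hxy : P.part x = P.part y := by
        simpa only [part_increasingCycle_apply] using congrArg P.part h
      rw [hxy] at h
      exact (P.part y).increasingCycle.injective h

variable {P}

theorem increasingCycles_apply (x : X) : P.increasingCycles x = (P.part x).increasingCycle x :=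
  rfl

theorem increasingCycles_apply_mem_part_iff {x y : X} :
    P.increasingCycles y ∈ P.part x ↔ y ∈ P.part x := by
  rw [P.mem_part_iff_part_eq_part (mem_univ _) (mem_univ _),
    P.mem_part_iff_part_eq_part (mem_univ _) (mem_univ _), increasingCycles_apply,
    part_increasingCycle_apply]

theorem lt_increasingCycles_apply {x y : X} (hy : y ∈ P.part x) (hxy : x < y) :
    x < P.increasingCycles x :=
  lt_increasingCycle_apply (P.mem_part (mem_univ x)) hy hxy

theorem sameCycle_increasingCycles_iff {x y : X} :
    P.increasingCycles.SameCycle x y ↔ y ∈ P.part x := by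
  have hx : x ∈ P.part x := P.mem_part (mem_univ x)
  constructor
  · intro h
    obtain ⟨i, rfl⟩ := h.exists_nat_pow_eq
    clear h
    induction i with
    | zero => exact hx
    | succ i ih => rwa [pow_succ', Perm.mul_apply, increasingCycles_apply_mem_part_iff]
  · intro hy
    have hagree : P.increasingCycles.subtypePerm (fun _ => increasingCycles_apply_mem_part_iff)
        = (P.part x).increasingCycle.subtypePerm (fun _ => increasingCycle_apply_mem_iff) := by
      ext ⟨z, hz⟩
      change P.increasingCycles z = (P.part x).increasingCycle z
      rw [increasingCycles_apply, P.part_eq_of_mem (P.part_mem.2 (mem_univ x)) hz]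
    have := (sameCycle_increasingCycle hx hy).subtypePerm
      (h := fun _ => increasingCycle_apply_mem_iff) (x := ⟨x, hx⟩) (y := ⟨y, hy⟩)
    rw [← hagree] at this
    exact Perm.sameCycle_subtypePerm.1 this

end Finpartition

theorem Setoid.card_quotient_eq_card_maximal {X : Type*} [LinearOrder X] [Fintype X]
    (s : Setoid X) : Nat.card (Quotient s) = Nat.card {x // ∀ y, s x y → y ≤ x} := by
  classical
  refine (Nat.card_eq_of_bijective (fun x => Quotient.mk s x.1) ⟨?_, ?_⟩).symm
  · rintro ⟨x, hx⟩ ⟨y, hy⟩ hxy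
    have hxy : s x y := Quotient.exact hxy
    exact Subtype.ext (le_antisymm (hy x (s.symm hxy)) (hx y hxy))
  · refine Quotient.ind fun x => ?_
    obtain ⟨z, hz, hmax⟩ :=
      exists_max_image {y | s x y} id ⟨x, mem_filter.2 ⟨mem_univ x, s.refl x⟩⟩
    rw [mem_filter] at hz
    refine ⟨⟨z, fun y hzy => hmax y ?_⟩, Quotient.sound (s.symm hz.2)⟩
    exact mem_filter.2 ⟨mem_univ y, s.trans hz.2 hzy⟩

section Positive

variable {m : ℕ}

instance (σ : Perm (Fin m)) : DecidableRel (orbitSetoid σ).r :=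
  inferInstanceAs (DecidableRel σ.SameCycle)

def orbitPartition (σ : Perm (Fin m)) : Finpartition (univ : Finset (Fin m)) :=
  Finpartition.ofSetoid (orbitSetoid σ)

theorem mem_part_orbitPartition {σ : Perm (Fin m)} {x y : Fin m} :
    y ∈ (orbitPartition σ).part x ↔ σ.SameCycle x y :=
  Finpartition.mem_part_ofSetoid_iff_rel

theorem numOrbits_add_card_filter_not_maximal (α : Perm (Fin m)) :
    numOrbits α + #{x | ∃ y, α.SameCycle x y ∧ x < y} = m := by
  have hmax : numOrbits α = #{x | ∀ y, α.SameCycle x y → y ≤ x} := by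
    rw [numOrbits, Setoid.card_quotient_eq_card_maximal, Nat.card_eq_fintype_card,
      Fintype.card_subtype]
    rfl
  have := card_filter_add_card_filter_not (s := (univ : Finset (Fin m)))
    fun x => ∀ y, α.SameCycle x y → y ≤ x
  simpa only [hmax, not_forall, not_le, exists_prop, card_univ, Fintype.card_fin] using this

theorem positive_iff {α : Perm (Fin m)} :
    Positive α ↔ ∀ x y, α.SameCycle x y → x < y → x < α x := by
  set A : Finset (Fin m) := {x | x < α x}
  set N : Finset (Fin m) := {x | ∃ y, α.SameCycle x y ∧ x < y}
  have hAN : A ⊆ N := fun x hx => by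
    simp only [A, N, mem_filter, mem_univ, true_and] at hx ⊢
    exact ⟨α x, Perm.sameCycle_apply_right.2 (Perm.SameCycle.refl α x), hx⟩
  have hcard : numOrbits α + #N = m := numOrbits_add_card_filter_not_maximal α
  rw [Positive, accents, show m - numOrbits α = #N by omega]
  change #A = #N ↔ _
  constructor
  · intro h x y hxy hlt
    have hx : x ∈ N := mem_filter.2 ⟨mem_univ x, y, hxy, hlt⟩
    rw [← eq_of_subset_of_card_le hAN h.ge] at hx
    exact (mem_filter.1 hx).2
  · intro h
    refine congrArg card (Subset.antisymm hAN fun x hx => ?_)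
    obtain ⟨y, hxy, hlt⟩ := (mem_filter.1 hx).2
    exact mem_filter.2 ⟨mem_univ x, h x y hxy hlt⟩

theorem positive_increasingCycles (P : Finpartition (univ : Finset (Fin m))) :
    Positive P.increasingCycles :=
  positive_iff.2 fun _ _ hxy hlt =>
    Finpartition.lt_increasingCycles_apply (Finpartition.sameCycle_increasingCycles_iff.1 hxy) hlt

theorem orbitPartition_increasingCycles (P : Finpartition (univ : Finset (Fin m))) :
    orbitPartition P.increasingCycles = P :=
  Finpartition.ext_part _ fun x => by
    ext y
    rw [mem_part_orbitPartition, Finpartition.sameCycle_increasingCycles_iff]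

theorem increasingCycles_orbitPartition {α : Perm (Fin m)} (hα : Positive α) :
    (orbitPartition α).increasingCycles = α := by
  refine Equiv.ext fun x => ?_
  rw [Finpartition.increasingCycles_apply, eq_comm]
  refine apply_eq_increasingCycle (fun z => ?_) (fun z hz y hy hzy => ?_) ?_
  · simp only [mem_part_orbitPartition, Perm.sameCycle_apply_right]
  · rw [mem_part_orbitPartition] at hz hy
    exact positive_iff.1 hα z y (hz.symm.trans hy) hzy
  · exact mem_part_orbitPartition.2 (Perm.SameCycle.refl α x)

end Positive

noncomputable def positiveEquivFinpartition (m : ℕ) :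
    {α : Perm (Fin m) // Positive α} ≃ Finpartition (univ : Finset (Fin m)) where
  toFun α := orbitPartition α.1
  invFun P := ⟨P.increasingCycles, positive_increasingCycles P⟩
  left_inv α := Subtype.ext (increasingCycles_orbitPartition α.2)
  right_inv P := orbitPartition_increasingCycles P

theorem card_positive_eq_bell_general (m : ℕ) :
    Nat.card {α : Equiv.Perm (Fin m) // Positive α}
        = Nat.card (Finpartition (Finset.univ : Finset (Fin m)))
      ∧ Nonempty
        ({α : Equiv.Perm (Fin m) // Positive α} ≃
          Finpartition (Finset.univ : Finset (Fin m))) :=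
  ⟨Nat.card_congr (positiveEquivFinpartition m), ⟨positiveEquivFinpartition m⟩⟩

/-- The number of positive permutations of `{1, …, m}` equals the number of partitions of
the set `{1, …, m}` into nonempty blocks (the `m`-th Bell number); indeed the two sets are
in one-to-one correspondence. -/
theorem card_positive_eq_bell (m : ℕ) (hm : 0 < m) :
    Nat.card {α : Equiv.Perm (Fin m) // Positive α}
        = Nat.card (Finpartition (Finset.univ : Finset (Fin m)))
      ∧ Nonempty
        ({α : Equiv.Perm (Fin m) // Positive α} ≃
          Finpartition (Finset.univ : Finset (Fin m))) :=
  card_positive_eq_bell_general m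
end

section
/- Let m be a positive integer and let σ ∈ S_m be the standard long cycle. For every permutation α ∈ S_m, the number of accents is preserved under cyclic shift: a(σ⁻¹ · α · σ) = a(α). -/
open scoped BigOperators

lemma finRotate_symm_eq (n : ℕ) (a : Fin (n + 1)) :
    (finRotate (n + 1)).symm a = a - 1 := by
  rw [Equiv.symm_apply_eq, finRotate_succ_apply, sub_add_cancel]

lemma key_lt (n : ℕ) (j k : Fin (n + 1)) :
    (finRotate (n + 1)).symm j < (finRotate (n + 1)).symm k ↔
      (j ≠ 0 ∧ (k = 0 ∨ j < k)) := by
  rw [finRotate_symm_eq, finRotate_symm_eq, Fin.lt_def, Fin.coe_sub_one, Fin.coe_sub_one]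
  have hj := j.isLt
  have hk := k.isLt
  simp only [ne_eq, Fin.ext_iff, Fin.val_zero, Fin.lt_def]
  split_ifs <;> omega

/-- The number of accents is preserved under cyclic shift: `a(σ⁻¹ α σ) = a(α)`, where
`σ = finRotate m` is the standard long cycle. -/
theorem accents_conj_finRotate (m : ℕ) (hm : 0 < m) (α : Equiv.Perm (Fin m)) :
    accents ((finRotate m)⁻¹ * α * finRotate m) = accents α := by
  obtain ⟨n, rfl⟩ := Nat.exists_eq_succ_of_ne_zero hm.ne'
  set σ := finRotate (n + 1) with hσ
  unfold accents
  have hmem : ∀ i : Fin (n + 1),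
      (i < ((finRotate (n+1))⁻¹ * α * finRotate (n+1)) i) ↔
        (σ i ≠ 0 ∧ (α (σ i) = 0 ∨ σ i < α (σ i))) := by
    intro i
    have : ((finRotate (n+1))⁻¹ * α * finRotate (n+1)) i = σ.symm (α (σ i)) := rfl
    rw [this]
    have h2 := key_lt n (σ i) (α (σ i))
    rw [Equiv.symm_apply_apply] at h2
    exact h2
  apply Finset.card_bij (fun i _ => if α (σ i) = 0 then 0 else σ i)
  · intro i hi
    rw [Finset.mem_filter] at hi ⊢
    refine ⟨Finset.mem_univ _, ?_⟩
    obtain ⟨hne, hcase⟩ := (hmem i).mp hi.2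
    split_ifs with h0
    · -- α (σ i) = 0, need 0 < α 0
      have hσi : σ i ≠ 0 := hne
      have : α 0 ≠ 0 := by
        intro h
        exact hσi (α.injective (h0.trans h.symm))
      exact Fin.pos_iff_ne_zero.mpr this
    · rcases hcase with h | h
      · exact absurd h h0
      · exact h
  · intro i₁ h₁ i₂ h₂ heq
    rw [Finset.mem_filter] at h₁ h₂
    obtain ⟨hne₁, -⟩ := (hmem i₁).mp h₁.2
    obtain ⟨hne₂, -⟩ := (hmem i₂).mp h₂.2
    split_ifs at heq with ha hb hb
    · exact σ.injective (α.injective (ha.trans hb.symm))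
    · exact absurd heq.symm hne₂
    · exact absurd heq hne₁
    · exact σ.injective heq
  · intro k hk
    rw [Finset.mem_filter] at hk
    have hk2 := hk.2
    by_cases hk0 : k = 0
    · subst hk0
      have hα0 : α 0 ≠ 0 := Fin.pos_iff_ne_zero.mp hk2
      refine ⟨σ.symm (α.symm 0), ?_, ?_⟩
      · rw [Finset.mem_filter]
        refine ⟨Finset.mem_univ _, (hmem _).mpr ?_⟩
        rw [σ.apply_symm_apply]
        refine ⟨?_, Or.inl (α.apply_symm_apply 0)⟩
        intro h
        have h3 := congrArg α h
        rw [α.apply_symm_apply] at h3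
        exact hα0 h3.symm
      · rw [σ.apply_symm_apply]
        exact if_pos (α.apply_symm_apply 0)
    · have hαk : α k ≠ 0 := by
        intro h
        rw [h] at hk2
        exact absurd (Fin.lt_of_le_of_lt (Fin.zero_le k) hk2).ne' (by simp)
      refine ⟨σ.symm k, ?_, ?_⟩
      · rw [Finset.mem_filter]
        refine ⟨Finset.mem_univ _, (hmem _).mpr ?_⟩
        rw [σ.apply_symm_apply]
        exact ⟨hk0, Or.inr hk2⟩
      · simp only [σ.apply_symm_apply]
        rw [if_neg hαk]
end

section
/- Let m be a positive integer. A permutation α ∈ S_m is positive if and only if each of its disjoint cycles is positive; that is, a(α) = m − c(α) holds if and only if every orbit O of α on {1,…,m} satisfies #{i ∈ O : α(i) > i} = |O| − 1. -/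
open scoped BigOperators

/-- A permutation is positive iff each of its disjoint cycles is positive:
`a(α) = m − c(α)` iff every orbit `O` of `α` contains exactly `|O| − 1` accents. -/
theorem positive_iff_cycles_positive (m : ℕ) (hm : 0 < m) (α : Equiv.Perm (Fin m)) :
    accents α = m - numOrbits α ↔
      ∀ x : Fin m,
        (Finset.univ.filter fun i : Fin m => α.SameCycle x i ∧ i < α i).card
          = (Finset.univ.filter fun i : Fin m => α.SameCycle x i).card - 1 := by
  classical
  haveI : DecidableEq (Quotient (orbitSetoid α)) := Classical.decEq _
  haveI : Fintype (Quotient (orbitSetoid α)) := Quotient.fintype _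
  set f : Fin m → Quotient (orbitSetoid α) := Quotient.mk (orbitSetoid α) with hf
  set A : Quotient (orbitSetoid α) → ℕ :=
    fun q => (Finset.univ.filter fun i : Fin m => f i = q ∧ i < α i).card with hAdef
  set B : Quotient (orbitSetoid α) → ℕ :=
    fun q => (Finset.univ.filter fun i : Fin m => f i = q).card with hBdef
  -- fibers correspond to same-cycle sets
  have hfiber : ∀ x : Fin m, ∀ i : Fin m, f i = f x ↔ α.SameCycle x i := by
    intro x i
    constructor
    · intro h
      exact (Quotient.eq.mp h).symm
    · intro h
      exact Quotient.sound h.symm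
  have hBx : ∀ x : Fin m,
      B (f x) = (Finset.univ.filter fun i : Fin m => α.SameCycle x i).card := by
    intro x
    apply Finset.card_bij (fun a _ => a)
    · intro a ha
      simp only [Finset.mem_filter, Finset.mem_univ, true_and] at ha ⊢
      exact (hfiber x a).mp ha
    · intro a b _ _ h; exact h
    · intro b hb
      simp only [Finset.mem_filter, Finset.mem_univ, true_and] at hb ⊢
      exact ⟨b, (hfiber x b).mpr hb, rfl⟩
  have hAx : ∀ x : Fin m,
      A (f x) = (Finset.univ.filter fun i : Fin m => α.SameCycle x i ∧ i < α i).card := by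
    intro x
    apply Finset.card_bij (fun a _ => a)
    · intro a ha
      simp only [Finset.mem_filter, Finset.mem_univ, true_and] at ha ⊢
      exact ⟨(hfiber x a).mp ha.1, ha.2⟩
    · intro a b _ _ h; exact h
    · intro b hb
      simp only [Finset.mem_filter, Finset.mem_univ, true_and] at hb ⊢
      exact ⟨b, ⟨(hfiber x b).mpr hb.1, hb.2⟩, rfl⟩
  -- key inequality: in each orbit, at most |O| - 1 accents
  have key : ∀ x : Fin m,
      (Finset.univ.filter fun i : Fin m => α.SameCycle x i ∧ i < α i).card
        ≤ (Finset.univ.filter fun i : Fin m => α.SameCycle x i).card - 1 := by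
    intro x
    set O := Finset.univ.filter fun i : Fin m => α.SameCycle x i with hO
    have hxO : x ∈ O := Finset.mem_filter.mpr ⟨Finset.mem_univ _, Equiv.Perm.SameCycle.refl α x⟩
    obtain ⟨M, hM, hmax⟩ := O.exists_max_image id ⟨x, hxO⟩
    have hMx : α.SameCycle x M := (Finset.mem_filter.mp hM).2
    have hαM : α M ∈ O := by
      simp only [hO, Finset.mem_filter, Finset.mem_univ, true_and]
      exact hMx.trans ⟨1, by simp⟩
    have hnot : ¬ (M < α M) := not_lt.2 (hmax _ hαM)
    have hsub : (Finset.univ.filter fun i : Fin m => α.SameCycle x i ∧ i < α i)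
        ⊆ O.erase M := by
      intro i hi
      simp only [Finset.mem_filter, Finset.mem_univ, true_and] at hi
      refine Finset.mem_erase.2 ⟨?_, by simp [hO, hi.1]⟩
      rintro rfl; exact hnot hi.2
    calc (Finset.univ.filter fun i : Fin m => α.SameCycle x i ∧ i < α i).card
        ≤ (O.erase M).card := Finset.card_le_card hsub
      _ = O.card - 1 := Finset.card_erase_of_mem hM
  have hkeyq : ∀ q : Quotient (orbitSetoid α), A q ≤ B q - 1 := by
    intro q
    obtain ⟨x, rfl⟩ := q.exists_rep
    rw [show (Quotient.mk (orbitSetoid α) x) = f x from rfl, hAx, hBx]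
    exact key x
  have hB1 : ∀ q : Quotient (orbitSetoid α), 1 ≤ B q := by
    intro q
    obtain ⟨x, rfl⟩ := q.exists_rep
    have : x ∈ Finset.univ.filter fun i : Fin m => f i = Quotient.mk (orbitSetoid α) x :=
      Finset.mem_filter.mpr ⟨Finset.mem_univ _, rfl⟩
    exact Finset.card_pos.mpr ⟨x, this⟩
  -- sum decompositions
  have hA : accents α = ∑ q : Quotient (orbitSetoid α), A q := by
    rw [accents, Finset.card_eq_sum_card_fiberwise
      (f := f) (t := Finset.univ) (fun a _ => Finset.mem_univ _)]
    refine Finset.sum_congr rfl fun q _ => ?_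
    rw [hAdef, Finset.filter_filter]
    exact congrArg Finset.card (Finset.filter_congr fun i _ => by tauto)
  have hBsum : m = ∑ q : Quotient (orbitSetoid α), B q := by
    have := Finset.card_eq_sum_card_fiberwise
      (s := (Finset.univ : Finset (Fin m))) (f := f) (t := Finset.univ)
      (fun a _ => Finset.mem_univ _)
    simpa using this
  have hc : numOrbits α = Fintype.card (Quotient (orbitSetoid α)) := by
    rw [numOrbits, Nat.card_eq_fintype_card]
  have hBsub : m - numOrbits α = ∑ q : Quotient (orbitSetoid α), (B q - 1) := by
    have h1 : ∑ q : Quotient (orbitSetoid α), B q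
        = (∑ q : Quotient (orbitSetoid α), (B q - 1)) + Fintype.card (Quotient (orbitSetoid α)) := by
      rw [show Fintype.card (Quotient (orbitSetoid α)) = ∑ _q : Quotient (orbitSetoid α), 1 by
        simp, ← Finset.sum_add_distrib]
      exact Finset.sum_congr rfl fun q _ => (Nat.sub_add_cancel (hB1 q)).symm
    omega
  rw [hA, hBsub]
  rw [Finset.sum_eq_sum_iff_of_le fun q _ => hkeyq q]
  constructor
  · intro h x
    have := h (f x) (Finset.mem_univ _)
    rwa [hAx, hBx] at this
  · intro h q _
    obtain ⟨x, rfl⟩ := q.exists_rep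
    rw [show (Quotient.mk (orbitSetoid α) x) = f x from rfl, hAx, hBx]
    exact h x
end
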